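/- arXiv:2408.01365 — 7 statements merged into one kernel-verified Lean document; each statement's English description precedes it below -/
import Mathlib

section
/- For the linear loss, every training sample is activated at every step, the result of one epoch of SGD over any sub-multiset T' of the training data is w*(T') = w⁰ + Σ_{(x,y)∈T'} α·y·(η⊗x) (independently of the processing order), and the sub-multiset T* := {(x,y) ∈ T : y_test·α·y·⟨η⊗x, x_test⟩ > 0} of 'good' samples maximizes the quantity y_test·⟨w*(T'), x_test⟩ over all sub-multisets T' ⊆ T, i.e. y_test·⟨w*(T*), x_test⟩ ≥ y_test·⟨w*(T'), x_test⟩ for every T' ⊆ T. -/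
open Classical

/-- One SGD update for the linear loss `L(s) = -α (s + β)` with learning-rate vector `η`:
`w ↦ w + α y (η ⊗ x)`. -/
noncomputable def linStep (d : ℕ) (α : ℝ) (η : Fin d → ℝ)
    (w : Fin d → ℝ) (p : (Fin d → ℝ) × ℝ) : Fin d → ℝ :=
  fun i => w i + α * p.2 * (η i * p.1 i)

/-- `w*(T') = w⁰ + Σ_{(x,y) ∈ T'} α y (η ⊗ x)`. -/
noncomputable def wStar (d : ℕ) (α : ℝ) (η w0 : Fin d → ℝ)
    (T : Multiset ((Fin d → ℝ) × ℝ)) : Fin d → ℝ :=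
  fun i => w0 i + (T.map (fun p => α * p.2 * (η i * p.1 i))).sum

/-- Dot product on `ℝ^d`. -/
noncomputable def dotP (d : ℕ) (a b : Fin d → ℝ) : ℝ := ∑ i, a i * b i

/-!
For the linear loss the gradient does not depend on the parameter, so every SGD step adds the
fixed vector `α y (η ⊗ x)` and an epoch just sums these vectors, in any order. Hence
`y_test ⟨w*(T'), x_test⟩` is `y_test ⟨w⁰, x_test⟩` plus a sum of per-sample contributions, and
such a sum over sub-multisets is largest when exactly the samples with positive contribution
are kept.
-/

section SubmultisetSums

variable {ι M : Type*}

theorem Multiset.sum_map_le_sum_map_of_le [AddCommMonoid M] [PartialOrder M]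
    [IsOrderedAddMonoid M] {s t : Multiset ι} (f : ι → M) (hst : s ≤ t)
    (hf : ∀ i ∈ t, 0 ≤ f i) : (s.map f).sum ≤ (t.map f).sum := by
  obtain ⟨u, rfl⟩ := Multiset.le_iff_exists_add.mp hst
  rw [Multiset.map_add, Multiset.sum_add]
  exact le_add_of_nonneg_right <| Multiset.sum_nonneg fun _ hx => by
    obtain ⟨i, hi, rfl⟩ := Multiset.mem_map.mp hx
    exact hf i (Multiset.mem_add.mpr (Or.inr hi))

theorem Multiset.sum_map_le_sum_map_filter_pos [AddCommMonoid M] [LinearOrder M]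
    [IsOrderedAddMonoid M] (s : Multiset ι) (f : ι → M) [DecidablePred fun i => 0 < f i] :
    (s.map f).sum ≤ ((s.filter fun i => 0 < f i).map f).sum := by
  have hneg : ((s.filter fun i => ¬0 < f i).map f).sum ≤ 0 := by
    simpa using Multiset.sum_map_le_sum_map f (fun _ => 0) fun i hi =>
      not_lt.mp (Multiset.mem_filter.mp hi).2
  calc (s.map f).sum
      = ((s.filter fun i => 0 < f i).map f).sum
          + ((s.filter fun i => ¬0 < f i).map f).sum := by
        rw [← Multiset.sum_add, ← Multiset.map_add, Multiset.filter_add_not]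
    _ ≤ ((s.filter fun i => 0 < f i).map f).sum := add_le_of_nonpos_right hneg

theorem Multiset.sum_map_le_sum_map_filter_pos_of_le [AddCommMonoid M] [LinearOrder M]
    [IsOrderedAddMonoid M] {s t : Multiset ι} (f : ι → M) [DecidablePred fun i => 0 < f i]
    (hst : s ≤ t) : (s.map f).sum ≤ ((t.filter fun i => 0 < f i).map f).sum :=
  (s.sum_map_le_sum_map_filter_pos f).trans <|
    Multiset.sum_map_le_sum_map_of_le f (Multiset.filter_le_filter _ hst) fun _ hi =>
      (Multiset.mem_filter.mp hi).2.le

end SubmultisetSums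

theorem deriv_linear_loss (α β s : ℝ) : deriv (fun t : ℝ => -α * (t + β)) s = -α := by
  simp

section LinearLossSGD

variable {d : ℕ} {α : ℝ} {η : Fin d → ℝ}

theorem wStar_zero (w : Fin d → ℝ) : wStar d α η w 0 = w := by
  funext i
  simp [wStar]

theorem wStar_linStep (w : Fin d → ℝ) (p : (Fin d → ℝ) × ℝ) (T : Multiset ((Fin d → ℝ) × ℝ)) :
    wStar d α η (linStep d α η w p) T = wStar d α η w (p ::ₘ T) := by
  funext i
  simp only [wStar, linStep, Multiset.map_cons, Multiset.sum_cons]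
  ring

theorem foldl_linStep (l : List ((Fin d → ℝ) × ℝ)) (w : Fin d → ℝ) :
    l.foldl (linStep d α η) w = wStar d α η w l := by
  induction l generalizing w with
  | nil => exact (wStar_zero w).symm
  | cons p l ih => rw [List.foldl_cons, ih, wStar_linStep, Multiset.cons_coe]

theorem dotP_wStar (w x : Fin d → ℝ) (T : Multiset ((Fin d → ℝ) × ℝ)) :
    dotP d (wStar d α η w T) x =
      dotP d w x + (T.map fun p => α * p.2 * dotP d (fun i => η i * p.1 i) x).sum := by
  simp only [dotP, wStar, add_mul, Finset.sum_add_distrib, ← Multiset.sum_map_mul_right,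
    Finset.mul_sum, Multiset.sum_map_sum, mul_assoc]

end LinearLossSGD

theorem stmt0_general (d : ℕ) (α β : ℝ) (hα : 0 < α) (η : Fin d → ℝ)
    (w0 xtest : Fin d → ℝ) (ytest : ℝ)
    (T : Multiset ((Fin d → ℝ) × ℝ)) :
    -- every training sample is activated at every step: the loss derivative never vanishes
    (∀ s : ℝ, deriv (fun t : ℝ => -α * (t + β)) s ≠ 0) ∧
    -- the SGD update for the linear loss is exactly `linStep`
    (∀ w : Fin d → ℝ, ∀ p : (Fin d → ℝ) × ℝ,
      (fun i => w i - η i * (deriv (fun t : ℝ => -α * (t + β)) (p.2 * dotP d w p.1)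
          * (p.2 * p.1 i)))
        = linStep d α η w p) ∧
    -- one epoch over any sub-multiset, processed in any order, yields `w*(T')`
    (∀ T' : Multiset ((Fin d → ℝ) × ℝ), T' ≤ T →
      ∀ l : List ((Fin d → ℝ) × ℝ), (l : Multiset ((Fin d → ℝ) × ℝ)) = T' →
        l.foldl (linStep d α η) w0 = wStar d α η w0 T') ∧
    -- the good sub-multiset `T*` maximizes `y_test ⟨w*(T'), x_test⟩`
    (∀ T' : Multiset ((Fin d → ℝ) × ℝ), T' ≤ T →
      ytest * dotP d (wStar d α η w0 T') xtest ≤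
        ytest * dotP d (wStar d α η w0
          (T.filter (fun p =>
            0 < ytest * (α * p.2) * dotP d (fun i => η i * p.1 i) xtest))) xtest) := by
  have hderiv := deriv_linear_loss α β
  refine ⟨fun s => by simpa [hderiv] using hα.ne', fun w p => ?_,
    fun _ _ l hl => hl ▸ foldl_linStep l w0, fun T' hT' => ?_⟩
  · funext i
    simp only [hderiv, linStep]
    ring
  · simp only [dotP_wStar, mul_add, ← Multiset.sum_map_mul_left, ← mul_assoc]
    gcongr
    exact Multiset.sum_map_le_sum_map_filter_pos_of_le _ hT'

/-- For linear loss: every sample is always activated (the derivative of the loss never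
vanishes), the SGD update is exactly `linStep`, one epoch of SGD over any sub-multiset `T'`
of `T` (processed in any order) yields `w*(T')` independently of the order, and the
sub-multiset `T*` of good samples maximizes `y_test ⟨w*(T'), x_test⟩` over all `T' ⊆ T`. -/
theorem stmt0 (d : ℕ) (α β : ℝ) (hα : 0 < α) (η : Fin d → ℝ) (hη : ∀ i, 0 ≤ η i)
    (w0 xtest : Fin d → ℝ) (ytest : ℝ) (hytest : ytest = 1 ∨ ytest = -1)
    (T : Multiset ((Fin d → ℝ) × ℝ)) (hT : ∀ p ∈ T, p.2 = 1 ∨ p.2 = -1) :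
    -- every training sample is activated at every step: the loss derivative never vanishes
    (∀ s : ℝ, deriv (fun t : ℝ => -α * (t + β)) s ≠ 0) ∧
    -- the SGD update for the linear loss is exactly `linStep`
    (∀ w : Fin d → ℝ, ∀ p : (Fin d → ℝ) × ℝ,
      (fun i => w i - η i * (deriv (fun t : ℝ => -α * (t + β)) (p.2 * dotP d w p.1)
          * (p.2 * p.1 i)))
        = linStep d α η w p) ∧
    -- one epoch over any sub-multiset, processed in any order, yields `w*(T')`
    (∀ T' : Multiset ((Fin d → ℝ) × ℝ), T' ≤ T →
      ∀ l : List ((Fin d → ℝ) × ℝ), (l : Multiset ((Fin d → ℝ) × ℝ)) = T' →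
        l.foldl (linStep d α η) w0 = wStar d α η w0 T') ∧
    -- the good sub-multiset `T*` maximizes `y_test ⟨w*(T'), x_test⟩`
    (∀ T' : Multiset ((Fin d → ℝ) × ℝ), T' ≤ T →
      ytest * dotP d (wStar d α η w0 T') xtest ≤
        ytest * dotP d (wStar d α η w0
          (T.filter (fun p =>
            0 < ytest * (α * p.2) * dotP d (fun i => η i * p.1 i) xtest))) xtest) :=
  stmt0_general d α β hα η w0 xtest ytest T
end

section
/- Assume β ≥ 0. Let T be a list of one-dimensional training samples processed in a fixed order, and let T* be the sublist of T consisting of its good samples (in the same order). If there exists a sublist T' of T such that the hinge-SGD fold over T' starting from w⁰ ends at a parameter w' with y_test·w'·x_test ≥ 0, then the hinge-SGD fold over T* starting from w⁰ ends at a parameter w* with y_test·w*·x_test ≥ 0. -/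
open Classical

/-- One SGD update for a one-dimensional linear classifier with hinge-like loss
`L(s) = -α (s - β)` for `s < β` and `0` otherwise: if the sample is activated
(`y w x < β`) the parameter becomes `w + α η y x`, otherwise it is unchanged. -/
noncomputable def hingeStep1 (α β η : ℝ) (w : ℝ) (p : ℝ × ℝ) : ℝ :=
  if p.2 * w * p.1 < β then w + α * η * p.2 * p.1 else w

lemma step_good_le (α β η xtest ytest : ℝ) {p : ℝ × ℝ}
    (hg : 0 < ytest * (α * p.2 * η * p.1) * xtest) (w : ℝ) :
    ytest * w * xtest ≤ ytest * hingeStep1 α β η w p * xtest := by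
  unfold hingeStep1
  split
  · nlinarith
  · exact le_rfl

lemma step_bad_le (α β η xtest ytest : ℝ) {p : ℝ × ℝ}
    (hg : ¬ (0 < ytest * (α * p.2 * η * p.1) * xtest)) (w : ℝ) :
    ytest * hingeStep1 α β η w p * xtest ≤ ytest * w * xtest := by
  push_neg at hg
  unfold hingeStep1
  split
  · nlinarith
  · exact le_rfl

lemma step_good_pair (α β η xtest ytest : ℝ) (hα : 0 < α) (hβ : 0 ≤ β) (hη : 0 < η)
    {p : ℝ × ℝ} (hg : 0 < ytest * (α * p.2 * η * p.1) * xtest) (w1 w2 : ℝ)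
    (hinv : ytest * w2 * xtest ≤ ytest * w1 * xtest ∨ 0 ≤ ytest * w1 * xtest) :
    ytest * hingeStep1 α β η w2 p * xtest ≤ ytest * hingeStep1 α β η w1 p * xtest ∨
      0 ≤ ytest * hingeStep1 α β η w1 p * xtest := by
  have hyx : p.2 * p.1 ≠ 0 := by
    intro h0
    have h0' : ytest * (α * p.2 * η * p.1) * xtest = 0 := by
      linear_combination ytest * α * η * xtest * h0
    linarith
  have hsq : 0 < α * η * (p.2 * p.1) ^ 2 := by positivity
  unfold hingeStep1
  split_ifs with h1 h2 h2
  · -- both activated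
    rcases hinv with h | h
    · left; nlinarith
    · right; nlinarith
  · -- w2 activated, w1 not activated
    push_neg at h2
    right
    nlinarith [mul_nonneg (le_trans hβ h2) hg.le]
  · -- w2 not activated, w1 activated
    rcases hinv with h | h
    · left; nlinarith
    · right; nlinarith
  · exact hinv

lemma key (α β η xtest ytest : ℝ) (hα : 0 < α) (hβ : 0 ≤ β) (hη : 0 < η)
    {S T : List (ℝ × ℝ)} (hsub : S.Sublist T) :
    ∀ w1 w2 : ℝ,
      (ytest * w2 * xtest ≤ ytest * w1 * xtest ∨ 0 ≤ ytest * w1 * xtest) →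
      (ytest * (S.foldl (hingeStep1 α β η) w2) * xtest ≤
          ytest * ((T.filter (fun p => decide (0 < ytest * (α * p.2 * η * p.1) * xtest))).foldl
            (hingeStep1 α β η) w1) * xtest ∨
        0 ≤ ytest * ((T.filter (fun p => decide (0 < ytest * (α * p.2 * η * p.1) * xtest))).foldl
            (hingeStep1 α β η) w1) * xtest) := by
  induction hsub with
  | slnil => intro w1 w2 h; simpa using h
  | cons p hsub ih =>
      intro w1 w2 hinv
      by_cases hg : 0 < ytest * (α * p.2 * η * p.1) * xtest
      · simp only [List.filter_cons, hg, decide_eq_true_eq, if_pos, List.foldl_cons]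
        apply ih
        rcases hinv with h | h
        · left; exact le_trans h (step_good_le α β η xtest ytest hg w1)
        · right; exact le_trans h (step_good_le α β η xtest ytest hg w1)
      · simp only [List.filter_cons]
        rw [if_neg (by simpa using hg)]
        exact ih w1 w2 hinv
  | cons_cons p hsub ih =>
      intro w1 w2 hinv
      by_cases hg : 0 < ytest * (α * p.2 * η * p.1) * xtest
      · simp only [List.filter_cons]
        rw [if_pos (by simpa using hg)]
        rw [List.foldl_cons, List.foldl_cons]
        exact ih _ _ (step_good_pair α β η xtest ytest hα hβ hη hg w1 w2 hinv)
      · simp only [List.filter_cons]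
        rw [if_neg (by simpa using hg), List.foldl_cons]
        apply ih
        rcases hinv with h | h
        · left; exact le_trans (step_bad_le α β η xtest ytest hg w2) h
        · right; exact h

/-- For the hinge-like loss with `β ≥ 0` in dimension one: if some sublist `T'` of the
training list `T` makes the hinge-SGD fold from `w⁰` end at `w'` with
`y_test w' x_test ≥ 0`, then so does the sublist `T*` of good samples of `T`. -/
theorem stmt2 (α β η : ℝ) (hα : 0 < α) (hβ : 0 ≤ β) (hη : 0 < η)
    (w0 xtest ytest : ℝ) (hytest : ytest = 1 ∨ ytest = -1)
    (T : List (ℝ × ℝ)) (hT : ∀ p ∈ T, p.2 = 1 ∨ p.2 = -1)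
    (h : ∃ T' : List (ℝ × ℝ), T'.Sublist T ∧
      0 ≤ ytest * (T'.foldl (hingeStep1 α β η) w0) * xtest) :
    0 ≤ ytest *
        ((T.filter (fun p => decide (0 < ytest * (α * p.2 * η * p.1) * xtest))).foldl
          (hingeStep1 α β η) w0) * xtest := by
  obtain ⟨T', hsub, hT'⟩ := h
  rcases key α β η xtest ytest hα hβ hη hsub w0 w0 (Or.inl le_rfl) with h1 | h2
  · linarith
  · exact h2
end

section
/- In the subset-sum construction with β ≥ −1: for every sublist L of the list v₁,…,vₙ, every vector of L is activated during the hinge fold starting from w⁰ = (−18n²m²√γ, 0); consequently the fold over L ends at the parameter w⁰ + Σ_{v∈L} v. -/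
open Classical

/-- Dot product on `ℝ²`. -/
noncomputable def dot2 (w v : ℝ × ℝ) : ℝ := w.1 * v.1 + w.2 * v.2

/-- Hinge update with parameter `β` on `ℝ²` (with `α = 1` and unit learning rate):
if `⟨w, v⟩ < β` (the vector is activated) then `w` becomes `w + v`, otherwise unchanged. -/
noncomputable def hstep (β : ℝ) (w v : ℝ × ℝ) : ℝ × ℝ :=
  if dot2 w v < β then w + v else w

theorem arith_core (β γ s N M A L1 L2 : ℝ) (hβ : -1 ≤ β) (hγ : γ = max β 1)
    (hs2 : s^2 = γ) (hs1 : 1 ≤ s) (hN : 2 ≤ N) (hM : 1 ≤ M)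
    (hA1 : 1 ≤ A) (hAM : A ≤ M)
    (hL1 : 0 ≤ L1) (hL1' : L1 ≤ s) (hL2 : 0 ≤ L2) (hL2' : L2 ≤ 3*s*N*M) :
    (-(18*N^2*M^2)*s + L1) * (s/(N+1)) + L2 * (3*s*A) < β := by
  have hγ1 : (1:ℝ) ≤ γ := hγ ▸ le_max_right β 1
  have hγβ : -γ ≤ β := by
    rcases le_or_gt β 1 with h | h
    · rw [hγ, max_eq_right h]; linarith
    · rw [hγ, max_eq_left h.le]; linarith
  have hs0 : 0 < s := by linarith
  have hN1 : (0:ℝ) < N + 1 := by linarith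
  set d := s / (N+1) with hd_def
  have hd : 0 < d := by positivity
  have hsd : d * (N+1) = s := by rw [hd_def]; field_simp [hN1.ne']
  have hss : s * s = γ := by nlinarith
  have h1 : (-(18*N^2*M^2)*s + L1) * d ≤ ((-(18*N^2*M^2)+1)*s) * d := by
    apply mul_le_mul_of_nonneg_right _ hd.le
    nlinarith
  have h2 : L2 * (3*s*A) ≤ (3*s*N*M) * (3*s*M) := by
    have e1 : L2*(3*s*A) ≤ (3*s*N*M)*(3*s*A) :=
      mul_le_mul_of_nonneg_right hL2' (by nlinarith)
    have e2 : (3*s*N*M)*(3*s*A) ≤ (3*s*N*M)*(3*s*M) :=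
      mul_le_mul_of_nonneg_left (by nlinarith) (by nlinarith)
    linarith
  have hfac : 0 < 9*N*(N-1)*M^2 - (N+2) := by
    nlinarith [mul_nonneg (mul_nonneg (by linarith : (0:ℝ) ≤ N) (by linarith : (0:ℝ) ≤ N-1)) (by nlinarith : (0:ℝ) ≤ M^2-1)]
  have key : γ * (N+2-9*N*(N-1)*M^2) < 0 := by
    nlinarith [mul_pos (show (0:ℝ) < γ by linarith) hfac]
  have hid : (((-(18*N^2*M^2)+1)*s)*d + (3*s*N*M)*(3*s*M) + γ) * (N+1)
      = γ*(N+2-9*N*(N-1)*M^2) := by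
    linear_combination (-(18*N^2*M^2)+1)*s*hsd + ((-(18*N^2*M^2)+1) + 9*N*M^2*(N+1))*hss
  have h3 : ((-(18*N^2*M^2)+1)*s)*d + (3*s*N*M)*(3*s*M) < -γ := by
    by_contra h
    push_neg at h
    have h4 : (0:ℝ) ≤ (((-(18*N^2*M^2)+1)*s)*d + (3*s*N*M)*(3*s*M) + γ) * (N+1) :=
      mul_nonneg (by linarith) hN1.le
    rw [hid] at h4
    linarith
  linarith

/-- In the subset-sum construction with `β ≥ -1`: for every sublist `L` of `v₁, …, vₙ`,
every vector of `L` is activated during the hinge fold starting from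
`w⁰ = (-18 n² m² √γ, 0)`; consequently the fold over `L` ends at `w⁰ + Σ_{v ∈ L} v`. -/
theorem stmt4 (β : ℝ) (hβ : -1 ≤ β) (n m t : ℕ) (hn : 1 < n) (ht : 0 < t)
    (a : Fin n → ℕ) (ha : ∀ i, 0 < a i) (hm : m = Finset.univ.sup a)
    (γ : ℝ) (hγ : γ = max β 1)
    (v : Fin n → ℝ × ℝ)
    (hv : ∀ i, v i = (Real.sqrt γ / (n + 1), 3 * Real.sqrt γ * a i))
    (w0 : ℝ × ℝ) (hw0 : w0 = (-(18 * n ^ 2 * m ^ 2) * Real.sqrt γ, 0))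
    (L : List (ℝ × ℝ)) (hL : L.Sublist (List.ofFn v)) :
    (∀ (l₁ : List (ℝ × ℝ)) (x : ℝ × ℝ) (l₂ : List (ℝ × ℝ)), L = l₁ ++ x :: l₂ →
      dot2 (l₁.foldl (hstep β) w0) x < β) ∧
    L.foldl (hstep β) w0 = w0 + L.sum := by
  have hγ1 : (1:ℝ) ≤ γ := hγ ▸ le_max_right β 1
  set s := Real.sqrt γ with hs_def
  have hs2 : s^2 = γ := Real.sq_sqrt (by linarith)
  have hs1 : 1 ≤ s := by
    rw [hs_def, show (1:ℝ) = Real.sqrt 1 by simp]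
    exact Real.sqrt_le_sqrt hγ1
  have hs0 : 0 < s := by linarith
  have ham : ∀ i, a i ≤ m := fun i => hm ▸ Finset.le_sup (Finset.mem_univ i)
  have hm1 : 1 ≤ m := by
    have h0 := ham ⟨0, by omega⟩
    have h1 := ha ⟨0, by omega⟩
    omega
  -- sum bounds
  have sums : ∀ l : List (ℝ × ℝ), (∀ e ∈ l, ∃ i, e = v i) →
      0 ≤ l.sum.1 ∧ l.sum.1 ≤ l.length * (s/(n+1)) ∧
      0 ≤ l.sum.2 ∧ l.sum.2 ≤ l.length * (3*s*m) := by
    intro l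
    induction l with
    | nil => intro _; simp
    | cons e l ih =>
      intro h
      obtain ⟨i, rfl⟩ := h e (by simp)
      obtain ⟨p1, p2, p3, p4⟩ := ih (fun x hx => h x (by simp [hx]))
      have hA1 : (1:ℝ) ≤ (a i : ℝ) := by exact_mod_cast ha i
      have hAM : ((a i : ℝ)) ≤ (m : ℝ) := by exact_mod_cast ham i
      have hM1 : (1:ℝ) ≤ (m : ℝ) := by exact_mod_cast hm1
      have hd : (0:ℝ) < s/(n+1) := by positivity
      simp only [List.sum_cons, List.length_cons, Prod.fst_add, Prod.snd_add, hv i]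
      push_cast
      refine ⟨by positivity, ?_, by positivity, ?_⟩
      · nlinarith
      · nlinarith
  -- activation
  have act : ∀ l : List (ℝ × ℝ), (∀ e ∈ l, ∃ i, e = v i) → l.length ≤ n →
      ∀ i, dot2 (w0 + l.sum) (v i) < β := by
    intro l hmem hlen i
    obtain ⟨p1, p2, p3, p4⟩ := sums l hmem
    have hlenR : (l.length : ℝ) ≤ (n : ℝ) := by exact_mod_cast hlen
    have hnR : (2:ℝ) ≤ (n : ℝ) := by exact_mod_cast hn
    have hd : (0:ℝ) < s/(n+1) := by positivity
    have hL1' : l.sum.1 ≤ s := by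
      have : (l.length : ℝ) * (s/(n+1)) ≤ (n : ℝ) * (s/(n+1)) :=
        mul_le_mul_of_nonneg_right hlenR hd.le
      have h2 : (n : ℝ) * (s/(n+1)) ≤ s := by
        rw [div_eq_mul_inv, ← mul_assoc]
        rw [show (n:ℝ) * s * ((n:ℝ)+1)⁻¹ = ((n:ℝ)/((n:ℝ)+1)) * s by ring]
        have : (n:ℝ)/((n:ℝ)+1) ≤ 1 := by
          rw [div_le_one (by linarith)]; linarith
        nlinarith
      linarith
    have hL2' : l.sum.2 ≤ 3*s*(n:ℝ)*(m:ℝ) := by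
      have hM0 : (0:ℝ) ≤ (m:ℝ) := by positivity
      have : (l.length : ℝ) * (3*s*(m:ℝ)) ≤ (n : ℝ) * (3*s*(m:ℝ)) :=
        mul_le_mul_of_nonneg_right hlenR (by positivity)
      nlinarith
    have H := arith_core β γ s (n:ℝ) (m:ℝ) ((a i):ℝ) l.sum.1 l.sum.2 hβ hγ hs2 hs1
      hnR (by exact_mod_cast hm1) (by exact_mod_cast ha i) (by exact_mod_cast ham i)
      p1 hL1' p3 hL2'
    rw [hw0, hv i]
    simp only [dot2, Prod.fst_add, Prod.snd_add, zero_add]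
    push_cast
    push_cast at H
    convert H using 2 <;> ring
  -- fold equality
  have main : ∀ l : List (ℝ × ℝ), l.Sublist (List.ofFn v) →
      l.foldl (hstep β) w0 = w0 + l.sum := by
    intro l
    induction l using List.reverseRecOn with
    | nil => intro _; simp
    | append_singleton l x ih =>
      intro hl
      have hl' : l.Sublist (List.ofFn v) := (List.sublist_append_left l [x]).trans hl
      have hmem : ∀ e ∈ l, ∃ i, e = v i := by
        intro e he
        have h := hl'.subset he
        rw [List.mem_ofFn] at h
        obtain ⟨i, hi⟩ := h
        exact ⟨i, hi.symm⟩
      obtain ⟨i, rfl⟩ : ∃ i, x = v i := by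
        have h := hl.subset (by simp : x ∈ l ++ [x])
        rw [List.mem_ofFn] at h
        obtain ⟨i, hi⟩ := h
        exact ⟨i, hi.symm⟩
      have hlen : l.length ≤ n := by
        have h := hl.length_le
        simp only [List.length_append, List.length_singleton, List.length_ofFn] at h
        omega
      have hact := act l hmem hlen i
      rw [List.foldl_append, ih hl']
      simp [hstep, hact, add_assoc]
  refine ⟨?_, main L hL⟩
  intro l₁ x l₂ hsplit
  have h1 : (l₁ ++ [x]).Sublist (List.ofFn v) := by
    have hsub : (l₁ ++ [x]).Sublist L := by
      rw [hsplit]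
      exact (List.append_sublist_append_left l₁).mpr
        (List.cons_sublist_cons.mpr (List.nil_sublist l₂))
    exact hsub.trans hL
  have hl1 : l₁.Sublist (List.ofFn v) := (List.sublist_append_left l₁ [x]).trans h1
  have hmem : ∀ e ∈ l₁, ∃ i, e = v i := by
    intro e he
    have h := hl1.subset he
    rw [List.mem_ofFn] at h
    obtain ⟨i, hi⟩ := h
    exact ⟨i, hi.symm⟩
  obtain ⟨i, rfl⟩ : ∃ i, x = v i := by
    have h := h1.subset (by simp : x ∈ l₁ ++ [x])
    rw [List.mem_ofFn] at h
    obtain ⟨i, hi⟩ := h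
    exact ⟨i, hi.symm⟩
  have hlen : l₁.length ≤ n := by
    have h := h1.length_le
    simp only [List.length_append, List.length_singleton, List.length_ofFn] at h
    omega
  rw [main l₁ hl1]
  exact act l₁ hmem hlen i
end

section
/- In the subset-sum construction with β ≥ −1: there exists a subset S' ⊆ {1,…,n} with Σ_{i∈S'} aᵢ = t if and only if there exists a sublist L of the training list v₁,…,vₙ,v_c,v_b,v_a such that the hinge fold over L starting from w⁰ ends at a parameter w with ⟨w, u⟩ ≥ 0. -/
set_option maxHeartbeats 1000000

open Classical

private lemma hstep_fst_le (β : ℝ) (w x : ℝ × ℝ) (hx : 0 ≤ x.1) :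
    (hstep β w x).1 ≤ w.1 + x.1 := by
  unfold hstep; split
  · simp
  · simpa using hx

private lemma fold_fst_le (β : ℝ) : ∀ (L : List (ℝ × ℝ)) (w : ℝ × ℝ),
    (∀ x ∈ L, 0 ≤ x.1) → (L.foldl (hstep β) w).1 ≤ w.1 + (L.map Prod.fst).sum := by
  intro L
  induction L with
  | nil => intro w _; simp
  | cons x L ih =>
    intro w hx
    simp only [List.foldl_cons, List.map_cons, List.sum_cons]
    have h1 := ih (hstep β w x) (fun y hy => hx y (List.mem_cons_of_mem _ hy))
    have h2 := hstep_fst_le β w x (hx x List.mem_cons_self)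
    linarith

private lemma fold_v (β γ g : ℝ) (n m : ℕ) (a : Fin n → ℕ) (v : Fin n → ℝ × ℝ)
    (hg : g ^ 2 = γ) (hg1 : 1 ≤ g) (hβ1 : -1 ≤ β)
    (hn : 2 ≤ n) (hm : 1 ≤ m)
    (ha1 : ∀ i, 1 ≤ a i) (ham : ∀ i, a i ≤ m)
    (hv : ∀ i, v i = (g / (n + 1), 3 * g * a i)) :
    ∀ (l : List (Fin n)) (k S : ℕ), k + l.length ≤ n → S + (l.map a).sum ≤ n * m →
      (l.map v).foldl (hstep β) (((k : ℝ) / (n + 1) - 18 * n ^ 2 * m ^ 2) * g, 3 * g * S) =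
        (((k + l.length : ℕ) / (n + 1) - 18 * n ^ 2 * m ^ 2) * g,
          3 * g * ((S + (l.map a).sum : ℕ) : ℝ)) := by
  intro l
  induction l with
  | nil => intro k S _ _; simp
  | cons i l ih =>
    intro k S hk hS
    have hn1 : (0:ℝ) < (n:ℝ) + 1 := by positivity
    have hg0 : (0:ℝ) < g := lt_of_lt_of_le one_pos hg1
    have hkn : (k:ℝ) ≤ (n:ℝ) - 1 := by
      have : k + 1 ≤ n := by simp at hk; omega
      have := (Nat.cast_le (α := ℝ)).2 this
      push_cast at this; linarith
    have hSm : (S:ℝ) + (a i : ℝ) ≤ (n:ℝ) * m := by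
      have : S + a i ≤ n * m := by simp at hS; omega
      have := (Nat.cast_le (α := ℝ)).2 this
      push_cast at this; linarith
    have hai1 : (1:ℝ) ≤ (a i : ℝ) := by exact_mod_cast ha1 i
    have haim : (a i : ℝ) ≤ (m:ℝ) := by exact_mod_cast ham i
    have hnR : (2:ℝ) ≤ (n:ℝ) := by exact_mod_cast hn
    have hmR : (1:ℝ) ≤ (m:ℝ) := by exact_mod_cast hm
    have hS0 : (0:ℝ) ≤ (S:ℝ) := Nat.cast_nonneg _
    have hk0 : (0:ℝ) ≤ (k:ℝ) := Nat.cast_nonneg _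
    have hA0 : (0:ℝ) ≤ (a i : ℝ) := by linarith
    -- activation
    have key : (k:ℝ) - 18*n^2*m^2*((n:ℝ)+1) + 9*S*(a i)*((n:ℝ)+1)^2 < -(((n:ℝ)+1)^2) := by
      have e1 : 9*(S:ℝ)*(a i) ≤ 9*(((n:ℝ)*m - a i)*(a i)) := by
        nlinarith [mul_nonneg (by linarith : (0:ℝ) ≤ (n:ℝ)*m - S - a i) hA0]
      have e2 : ((n:ℝ)*m - a i)*(a i) ≤ ((n:ℝ)-1)*m^2 := by
        nlinarith [mul_nonneg (by linarith : (0:ℝ) ≤ (m:ℝ) - a i)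
          (by nlinarith : (0:ℝ) ≤ (n:ℝ)*m - m - a i)]
      have e1' : 9*(S:ℝ)*(a i) ≤ 9*(((n:ℝ)-1)*m^2) := by linarith
      have e3 : 9*(S:ℝ)*(a i)*((n:ℝ)+1)^2 ≤ 9*((n:ℝ)-1)*m^2*((n:ℝ)+1)^2 := by
        nlinarith [mul_le_mul_of_nonneg_right e1' (sq_nonneg ((n:ℝ)+1))]
      have hm2 : (1:ℝ) ≤ (m:ℝ)^2 := by nlinarith
      have e4 : 9*((n:ℝ)-1)*m^2*((n:ℝ)+1)^2 + ((n:ℝ)+1)^2 + (n:ℝ) < 18*n^2*m^2*((n:ℝ)+1) := by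
        have h8 := mul_le_mul_of_nonneg_right hm2
          (show (0:ℝ) ≤ ((n:ℝ)+1)*((n:ℝ)^2+1) by positivity)
        have hx3 : (0:ℝ) ≤ (n:ℝ)^3 := by positivity
        have hx2 : (0:ℝ) ≤ (n:ℝ)^2 := sq_nonneg _
        nlinarith [h8, hx3, hx2]
      linarith
    have hdot : dot2 (((k : ℝ) / (n + 1) - 18 * n ^ 2 * m ^ 2) * g, 3 * g * S) (v i) * ((n:ℝ)+1)^2
        = ((k:ℝ) - 18*n^2*m^2*((n:ℝ)+1) + 9*S*(a i)*((n:ℝ)+1)^2) * g^2 := by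
      rw [hv i]; simp only [dot2]
      field_simp
      ring
    have hlt : dot2 (((k : ℝ) / (n + 1) - 18 * n ^ 2 * m ^ 2) * g, 3 * g * S) (v i) < β := by
      have h2 : (1:ℝ) ≤ g^2 := by nlinarith
      have h4 : dot2 (((k : ℝ) / (n + 1) - 18 * n ^ 2 * m ^ 2) * g, 3 * g * S) (v i) * ((n:ℝ)+1)^2
          < (-g^2) * ((n:ℝ)+1)^2 := by
        rw [hdot]
        nlinarith [mul_lt_mul_of_pos_right key (show (0:ℝ) < g^2 by positivity)]
      have h5 := (mul_lt_mul_iff_left₀ (show (0:ℝ) < ((n:ℝ)+1)^2 by positivity)).1 h4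
      linarith
    have hstepeq : hstep β (((k : ℝ) / (n + 1) - 18 * n ^ 2 * m ^ 2) * g, 3 * g * S) (v i)
        = ((((k+1 : ℕ) : ℝ) / (n + 1) - 18 * n ^ 2 * m ^ 2) * g, 3 * g * ((S + a i : ℕ) : ℝ)) := by
      rw [hstep, if_pos hlt, hv i]
      have hne : ((n:ℝ)+1) ≠ 0 := ne_of_gt hn1
      rw [Prod.mk_add_mk, Prod.mk.injEq]
      constructor
      · push_cast; field_simp; ring
      · push_cast; ring
    simp only [List.map_cons, List.foldl_cons, hstepeq]
    have hb1 : (k+1) + l.length ≤ n := by simp at hk ⊢; omega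
    have hb2 : (S + a i) + (l.map a).sum ≤ n * m := by simp at hS ⊢; omega
    rw [ih (k+1) (S + a i) hb1 hb2]
    have h5 : (k+1) + l.length = k + (i::l).length := by simp [List.length_cons]; omega
    have h6 : (S + a i) + (l.map a).sum = S + ((i::l).map a).sum := by
      simp [List.sum_cons]; omega
    rw [h5, h6]
    simp only [List.map_cons]

private lemma step_c (β g : ℝ) (n m t : ℕ) (hg1 : 1 ≤ g) (hβ1 : -1 ≤ β)
    (hn : 2 ≤ n) (hm : 1 ≤ m) (k S : ℕ) (hk : k ≤ n) :
    hstep β (((k:ℝ)/((n:ℝ)+1) - 18*(n:ℝ)^2*(m:ℝ)^2)*g, 3*g*(S:ℝ))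
        ((18*(n:ℝ)^2*(m:ℝ)^2 - 2)*g, -3*(t:ℝ)*g)
      = (((k:ℝ)/((n:ℝ)+1) - 2)*g, 3*g*(S:ℝ) - 3*(t:ℝ)*g) := by
  have hn1 : (0:ℝ) < (n:ℝ) + 1 := by positivity
  have hg0 : (0:ℝ) < g := by linarith
  have hkd : (k:ℝ)/((n:ℝ)+1) ≤ 1 := by
    rw [div_le_one hn1]
    have : (k:ℝ) ≤ (n:ℝ) := by exact_mod_cast hk
    linarith
  have hN : (72:ℝ) ≤ 18*(n:ℝ)^2*(m:ℝ)^2 := by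
    have h1 : (2:ℝ) ≤ (n:ℝ) := by exact_mod_cast hn
    have h2 : (1:ℝ) ≤ (m:ℝ) := by exact_mod_cast hm
    have h3 : (4:ℝ) ≤ (n:ℝ)^2 := by nlinarith
    have h4 : (1:ℝ) ≤ (m:ℝ)^2 := by nlinarith
    nlinarith [mul_le_mul h3 h4 (by linarith) (by linarith)]
  set N : ℝ := 18*(n:ℝ)^2*(m:ℝ)^2 with hNdef
  have hdot : dot2 (((k:ℝ)/((n:ℝ)+1) - N)*g, 3*g*(S:ℝ)) ((N - 2)*g, -3*(t:ℝ)*g)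
      = (((k:ℝ)/((n:ℝ)+1) - N)*(N-2) - 9*(S:ℝ)*(t:ℝ)) * g^2 := by
    simp only [dot2]; ring
  have hlt : dot2 (((k:ℝ)/((n:ℝ)+1) - N)*g, 3*g*(S:ℝ)) ((N - 2)*g, -3*(t:ℝ)*g) < β := by
    rw [hdot]
    have hSt : (0:ℝ) ≤ 9*(S:ℝ)*(t:ℝ) := by positivity
    have h3 := mul_le_mul_of_nonneg_right (show (k:ℝ)/((n:ℝ)+1) - N ≤ 1 - N by linarith)
      (show (0:ℝ) ≤ N - 2 by linarith)
    have h4 : (0:ℝ) ≤ N * (N - 3) := mul_nonneg (by linarith) (by linarith)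
    have h5 : ((k:ℝ)/((n:ℝ)+1) - N)*(N-2) - 9*(S:ℝ)*(t:ℝ) < -1 := by nlinarith
    have h6 := mul_lt_mul_of_pos_right h5 (show (0:ℝ) < g^2 by positivity)
    nlinarith
  rw [hstep, if_pos hlt, Prod.mk_add_mk, Prod.mk.injEq]
  constructor <;> ring

/-- In the subset-sum construction with `β ≥ -1`: there is a subset `S' ⊆ {1, …, n}`
with `Σ_{i ∈ S'} aᵢ = t` iff some sublist `L` of the training list
`v₁, …, vₙ, v_c, v_b, v_a` makes the hinge fold from `w⁰` end at `w` with `⟨w, u⟩ ≥ 0`. -/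
theorem stmt5 (β : ℝ) (hβ : -1 ≤ β) (n m t : ℕ) (hn : 1 < n) (ht : 0 < t)
    (a : Fin n → ℕ) (ha : ∀ i, 0 < a i) (hm : m = Finset.univ.sup a)
    (γ : ℝ) (hγ : γ = max β 1)
    (v : Fin n → ℝ × ℝ)
    (hv : ∀ i, v i = (Real.sqrt γ / (n + 1), 3 * Real.sqrt γ * a i))
    (vc vb va w0 u : ℝ × ℝ)
    (hvc : vc = ((18 * n ^ 2 * m ^ 2 - 2) * Real.sqrt γ, -3 * t * Real.sqrt γ))
    (hvb : vb = (Real.sqrt γ, -Real.sqrt γ))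
    (hva : va = (Real.sqrt γ, Real.sqrt γ))
    (hw0 : w0 = (-(18 * n ^ 2 * m ^ 2) * Real.sqrt γ, 0))
    (hu : u = (1, 0)) :
    (∃ S' : Finset (Fin n), ∑ i ∈ S', a i = t) ↔
      (∃ L : List (ℝ × ℝ), L.Sublist (List.ofFn v ++ [vc, vb, va]) ∧
        0 ≤ dot2 (L.foldl (hstep β) w0) u) := by
  have hγ1 : (1:ℝ) ≤ γ := by rw [hγ]; exact le_max_right _ _
  have hβγ : β ≤ γ := by rw [hγ]; exact le_max_left _ _
  set g := Real.sqrt γ with hgdef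
  have hg : g ^ 2 = γ := Real.sq_sqrt (by linarith)
  have hg1 : 1 ≤ g := by nlinarith [Real.sqrt_nonneg γ]
  have hg0 : (0:ℝ) < g := by linarith
  have hn2 : 2 ≤ n := hn
  have hn1 : (0:ℝ) < (n:ℝ) + 1 := by positivity
  have ham : ∀ i, a i ≤ m := fun i => hm ▸ Finset.le_sup (Finset.mem_univ i)
  have hm1 : 1 ≤ m := le_trans (ha ⟨0, by omega⟩) (ham ⟨0, by omega⟩)
  have hsumall : ∑ i, a i ≤ n * m := by
    have := Finset.sum_le_card_nsmul Finset.univ a m (fun i _ => ham i)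
    simpa [Finset.card_univ, mul_comm] using this
  have hN : (72:ℝ) ≤ 18*(n:ℝ)^2*(m:ℝ)^2 := by
    have h1 : (2:ℝ) ≤ (n:ℝ) := by exact_mod_cast hn2
    have h2 : (1:ℝ) ≤ (m:ℝ) := by exact_mod_cast hm1
    have h3 : (4:ℝ) ≤ (n:ℝ)^2 := by nlinarith
    have h4 : (1:ℝ) ≤ (m:ℝ)^2 := by nlinarith
    nlinarith [mul_le_mul h3 h4 (by linarith) (by linarith)]
  have hw0' : w0 = ((((0:ℕ):ℝ)/((n:ℝ)+1) - 18*(n:ℝ)^2*(m:ℝ)^2) * g, 3*g*((0:ℕ):ℝ)) := by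
    rw [hw0]; norm_num
  have hfold := fold_v β γ g n m a v hg hg1 hβ hn2 hm1 ha ham
    (by intro i; rw [hv i])
  constructor
  · -- subset sum → sublist
    rintro ⟨S', hS'⟩
    classical
    set l : List (Fin n) := (List.finRange n).filter (fun i => decide (i ∈ S')) with hldef
    have hlsub : l.Sublist (List.finRange n) := List.filter_sublist
    have hlnd : l.Nodup := hlsub.nodup (List.nodup_finRange n)
    have hltf : l.toFinset = S' := by
      ext i; simp [hldef, List.mem_filter, List.mem_finRange]
    have hlsum : (l.map a).sum = t := by
      rw [← List.sum_toFinset a hlnd, hltf, hS']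
    have hllen : l.length ≤ n := by
      have := hlsub.length_le; simpa using this
    have htnm : t ≤ n * m := by
      rw [← hS']
      exact le_trans (Finset.sum_le_sum_of_subset (Finset.subset_univ S')) hsumall
    refine ⟨l.map v ++ [vc, vb, va], (hlsub.map v).append (List.Sublist.refl _) |>.trans
      (by rw [List.ofFn_eq_map]), ?_⟩
    rw [List.foldl_append, hw0', hfold l 0 0 (by simpa using hllen) (by simpa [hlsum] using htnm)]
    set k := l.length with hkdef
    have hkn : k ≤ n := hllen
    simp only [Nat.zero_add, hlsum]
    rw [hvc, hvb, hva]
    have h1 : ((k:ℝ)/((n:ℝ)+1) - 2) * g * g + (3*g*(t:ℝ) - 3*(t:ℝ)*g) * (-g)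
        = ((k:ℝ)/((n:ℝ)+1) - 2) * g^2 := by ring
    have hkd : (k:ℝ)/((n:ℝ)+1) < 1 := by
      rw [div_lt_one hn1]
      have : (k:ℝ) ≤ (n:ℝ) := by exact_mod_cast hkn
      linarith
    have hkd0 : (0:ℝ) ≤ (k:ℝ)/((n:ℝ)+1) := by positivity
    simp only [List.foldl_cons, List.foldl_nil]
    rw [show ((18 * (n:ℝ) ^ 2 * (m:ℝ) ^ 2 - 2) * g, -3 * (t:ℝ) * g)
        = ((18*(n:ℝ)^2*(m:ℝ)^2 - 2)*g, -3*(t:ℝ)*g) by norm_num,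
      step_c β g n m t hg1 hβ hn2 hm1 k t hkn]
    have hb : hstep β (((k:ℝ)/((n:ℝ)+1) - 2)*g, 3*g*(t:ℝ) - 3*(t:ℝ)*g) (g, -g)
        = (((k:ℝ)/((n:ℝ)+1) - 1)*g, 3*g*(t:ℝ) - 3*(t:ℝ)*g - g) := by
      rw [hstep, if_pos, Prod.mk_add_mk, Prod.mk.injEq]
      · constructor <;> ring
      · have hd : dot2 (((k:ℝ)/((n:ℝ)+1) - 2)*g, 3*g*(t:ℝ) - 3*(t:ℝ)*g) (g, -g)
            = ((k:ℝ)/((n:ℝ)+1) - 2) * g^2 := by simp only [dot2]; ring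
        rw [hd]
        nlinarith [mul_lt_mul_of_pos_right (show (k:ℝ)/((n:ℝ)+1) - 2 < -1 by linarith)
          (show (0:ℝ) < g^2 by positivity)]
    rw [hb]
    have hc : hstep β (((k:ℝ)/((n:ℝ)+1) - 1)*g, 3*g*(t:ℝ) - 3*(t:ℝ)*g - g) (g, g)
        = (((k:ℝ)/((n:ℝ)+1))*g, 3*g*(t:ℝ) - 3*(t:ℝ)*g) := by
      rw [hstep, if_pos, Prod.mk_add_mk, Prod.mk.injEq]
      · constructor <;> ring
      · have hd : dot2 (((k:ℝ)/((n:ℝ)+1) - 1)*g, 3*g*(t:ℝ) - 3*(t:ℝ)*g - g) (g, g)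
            = ((k:ℝ)/((n:ℝ)+1) - 2) * g^2 := by simp only [dot2]; ring
        rw [hd]
        nlinarith [mul_lt_mul_of_pos_right (show (k:ℝ)/((n:ℝ)+1) - 2 < -1 by linarith)
          (show (0:ℝ) < g^2 by positivity)]
    rw [hc, hu]
    simp only [dot2]
    norm_num
    positivity
  · -- sublist → subset sum
    rintro ⟨L, hLsub, hLdot⟩
    rw [List.ofFn_eq_map, List.sublist_append_iff] at hLsub
    obtain ⟨L₁, L₂, rfl, h1, h2⟩ := hLsub
    obtain ⟨l, hlsub, rfl⟩ := List.sublist_map_iff.mp h1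
    have hlnd : l.Nodup := hlsub.nodup (List.nodup_finRange n)
    have hllen : l.length ≤ n := by have := hlsub.length_le; simpa using this
    have hlsum : (l.map a).sum ≤ n * m := by
      have h3 : (l.map a).sum ≤ ((List.finRange n).map a).sum :=
        List.Sublist.sum_le_sum (hlsub.map a) (fun _ _ => Nat.zero_le _)
      have h4 : ((List.finRange n).map a).sum = ∑ i, a i := by
        rw [← List.ofFn_eq_map, List.sum_ofFn]
      omega
    rw [List.foldl_append, hw0',
      hfold l 0 0 (by simpa using hllen) (by simpa using hlsum), hu] at hLdot
    set k := l.length with hkdef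
    set S := (l.map a).sum with hSdef
    simp only [Nat.zero_add] at hLdot
    have hdot_fst : ∀ w : ℝ × ℝ, dot2 w (1, 0) = w.1 := by intro w; simp [dot2]
    rw [hdot_fst] at hLdot
    have hkn : k ≤ n := hllen
    have hkd : (k:ℝ)/((n:ℝ)+1) < 1 := by
      rw [div_lt_one hn1]
      have : (k:ℝ) ≤ (n:ℝ) := by exact_mod_cast hkn
      linarith
    have hkd0 : (0:ℝ) ≤ (k:ℝ)/((n:ℝ)+1) := by positivity
    set W : ℝ × ℝ := ((((k:ℕ):ℝ)/((n:ℝ)+1) - 18*(n:ℝ)^2*(m:ℝ)^2) * g, 3*g*((S:ℕ):ℝ)) with hW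
    have hWfst : W.1 = (((k:ℕ):ℝ)/((n:ℝ)+1) - 18*(n:ℝ)^2*(m:ℝ)^2) * g := rfl
    rcases List.sublist_cons_iff.mp h2 with h3 | ⟨r, rfl, hr⟩
    · -- no vc: impossible
      exfalso
      have hmem : ∀ x ∈ L₂, (0:ℝ) ≤ x.1 := by
        intro x hx
        have hx2 := h3.subset hx
        simp only [List.mem_cons, List.not_mem_nil, or_false] at hx2
        rcases hx2 with rfl | rfl <;> simp [hvb, hva] <;> linarith
      have hle := fold_fst_le β L₂ W hmem
      have h4 : (L₂.map Prod.fst).Sublist [g, g] := by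
        simpa [hvb, hva] using h3.map Prod.fst
      have hsum : (L₂.map Prod.fst).sum ≤ 2*g := by
        have h5 := List.Sublist.sum_le_sum h4
          (by intro x hx; simp only [List.mem_cons, List.not_mem_nil, or_false] at hx
              rcases hx with rfl | rfl <;> linarith)
        simp at h5; linarith
      have hneg : (((k:ℕ):ℝ)/((n:ℝ)+1) - 18*(n:ℝ)^2*(m:ℝ)^2) * g + 2*g < 0 := by
        nlinarith [mul_lt_mul_of_pos_right
          (show ((k:ℕ):ℝ)/((n:ℝ)+1) - 18*(n:ℝ)^2*(m:ℝ)^2 + 2 < 0 by linarith) hg0]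
      rw [hWfst] at hle
      linarith
    · -- vc present
      rw [List.foldl_cons] at hLdot
      have hstepc : hstep β W vc = ((((k:ℕ):ℝ)/((n:ℝ)+1) - 2)*g, 3*g*((S:ℕ):ℝ) - 3*(t:ℝ)*g) := by
        rw [hW, hvc]
        rw [show ((18 * (n:ℝ) ^ 2 * (m:ℝ) ^ 2 - 2) * g, -3 * (t:ℝ) * g)
            = ((18*(n:ℝ)^2*(m:ℝ)^2 - 2)*g, -3*(t:ℝ)*g) by norm_num]
        exact step_c β g n m t hg1 hβ hn2 hm1 k S hkn
      rw [hstepc] at hLdot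
      rcases List.sublist_cons_iff.mp hr with h4 | ⟨r', rfl, hr'⟩
      · -- vb missing: impossible
        exfalso
        have hmem : ∀ x ∈ r, (0:ℝ) ≤ x.1 := by
          intro x hx
          have hx2 := h4.subset hx
          simp only [List.mem_cons, List.not_mem_nil, or_false] at hx2
          rcases hx2 with rfl <;> simp [hva] <;> linarith
        have hle := fold_fst_le β r ((((k:ℕ):ℝ)/((n:ℝ)+1) - 2)*g, 3*g*((S:ℕ):ℝ) - 3*(t:ℝ)*g) hmem
        have h5 : (r.map Prod.fst).Sublist [g] := by simpa [hva] using h4.map Prod.fst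
        have hsum : (r.map Prod.fst).sum ≤ g := by
          have h6 := List.Sublist.sum_le_sum h5
            (by intro x hx; simp only [List.mem_cons, List.not_mem_nil, or_false] at hx
                rcases hx with rfl <;> linarith)
          simp at h6; linarith
        have hneg : (((k:ℕ):ℝ)/((n:ℝ)+1) - 2) * g + g < 0 := by
          nlinarith [mul_lt_mul_of_pos_right
            (show ((k:ℕ):ℝ)/((n:ℝ)+1) - 2 + 1 < 0 by linarith) hg0]
        simp only at hle
        linarith
      · -- vb present
        rw [List.foldl_cons] at hLdot
        by_cases hb : dot2 ((((k:ℕ):ℝ)/((n:ℝ)+1) - 2)*g, 3*g*((S:ℕ):ℝ) - 3*(t:ℝ)*g) vb < β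
        · rw [hstep, if_pos hb, hvb, Prod.mk_add_mk] at hLdot
          have hdb : dot2 ((((k:ℕ):ℝ)/((n:ℝ)+1) - 2)*g, 3*g*((S:ℕ):ℝ) - 3*(t:ℝ)*g) vb
              = (((k:ℕ):ℝ)/((n:ℝ)+1) - 2 - 3*((S:ℕ):ℝ) + 3*(t:ℝ)) * g^2 := by
            rw [hvb]; simp only [dot2]; ring
          have hb1 : ((k:ℕ):ℝ)/((n:ℝ)+1) - 2 - 3*((S:ℕ):ℝ) + 3*(t:ℝ) < 1 := by
            rw [hdb] at hb
            have h7 : (((k:ℕ):ℝ)/((n:ℝ)+1) - 2 - 3*((S:ℕ):ℝ) + 3*(t:ℝ)) * g^2 < 1 * g^2 := by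
              rw [one_mul]; nlinarith
            exact (mul_lt_mul_iff_left₀ (show (0:ℝ) < g^2 by positivity)).1 h7
          have htS : t ≤ S := by
            have h8 : (t:ℝ) < (S:ℝ) + 1 := by linarith
            have h9 : t < S + 1 := by exact_mod_cast h8
            omega
          rcases List.sublist_cons_iff.mp hr' with h5 | ⟨r'', rfl, hr''⟩
          · -- va missing: impossible
            exfalso
            have hre : r' = [] := List.sublist_nil.mp h5
            subst hre
            simp only [List.foldl_nil] at hLdot
            have hneg : (((k:ℕ):ℝ)/((n:ℝ)+1) - 2) * g + g < 0 := by
              nlinarith [mul_lt_mul_of_pos_right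
                (show ((k:ℕ):ℝ)/((n:ℝ)+1) - 2 + 1 < 0 by linarith) hg0]
            have hLdot' : (0:ℝ) ≤ (((k:ℕ):ℝ)/((n:ℝ)+1) - 2)*g + g := hLdot
            linarith
          · have hre : r'' = [] := List.sublist_nil.mp hr''
            subst hre
            rw [List.foldl_cons, List.foldl_nil] at hLdot
            by_cases hc : dot2 ((((k:ℕ):ℝ)/((n:ℝ)+1) - 2)*g + g, 3*g*((S:ℕ):ℝ) - 3*(t:ℝ)*g + -g) va < β
            · have hdc : dot2 ((((k:ℕ):ℝ)/((n:ℝ)+1) - 2)*g + g, 3*g*((S:ℕ):ℝ) - 3*(t:ℝ)*g + -g) va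
                  = (((k:ℕ):ℝ)/((n:ℝ)+1) - 2 + 3*((S:ℕ):ℝ) - 3*(t:ℝ)) * g^2 := by
                rw [hva]; simp only [dot2]; ring
              have hc1 : ((k:ℕ):ℝ)/((n:ℝ)+1) - 2 + 3*((S:ℕ):ℝ) - 3*(t:ℝ) < 1 := by
                rw [hdc] at hc
                have h7 : (((k:ℕ):ℝ)/((n:ℝ)+1) - 2 + 3*((S:ℕ):ℝ) - 3*(t:ℝ)) * g^2 < 1 * g^2 := by
                  rw [one_mul]; nlinarith
                exact (mul_lt_mul_iff_left₀ (show (0:ℝ) < g^2 by positivity)).1 h7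
              have hSt : S ≤ t := by
                have h8 : (S:ℝ) < (t:ℝ) + 1 := by linarith
                have h9 : S < t + 1 := by exact_mod_cast h8
                omega
              refine ⟨l.toFinset, ?_⟩
              rw [List.sum_toFinset a hlnd]
              omega
            · exfalso
              rw [hstep, if_neg hc] at hLdot
              have hneg : (((k:ℕ):ℝ)/((n:ℝ)+1) - 2) * g + g < 0 := by
                nlinarith [mul_lt_mul_of_pos_right
                  (show ((k:ℕ):ℝ)/((n:ℝ)+1) - 2 + 1 < 0 by linarith) hg0]
              have hLdot' : (0:ℝ) ≤ (((k:ℕ):ℝ)/((n:ℝ)+1) - 2)*g + g := hLdot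
              linarith
        · -- vb not activated: impossible
          exfalso
          rw [hstep, if_neg hb] at hLdot
          have hre : r' = [] ∨ r' = [va] := by
            rcases List.sublist_cons_iff.mp hr' with h5 | ⟨r'', rfl, hr''⟩
            · exact Or.inl (List.sublist_nil.mp h5)
            · exact Or.inr (by rw [List.sublist_nil.mp hr''])
          have hneg : (((k:ℕ):ℝ)/((n:ℝ)+1) - 2) * g + g < 0 := by
            nlinarith [mul_lt_mul_of_pos_right
              (show ((k:ℕ):ℝ)/((n:ℝ)+1) - 2 + 1 < 0 by linarith) hg0]
          rcases hre with rfl | rfl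
          · simp only [List.foldl_nil] at hLdot
            linarith
          · rw [List.foldl_cons, List.foldl_nil, hva] at hLdot
            have hle := hstep_fst_le β ((((k:ℕ):ℝ)/((n:ℝ)+1) - 2)*g, 3*g*((S:ℕ):ℝ) - 3*(t:ℝ)*g) (g, g)
              hg0.le
            have hle' : (hstep β ((((k:ℕ):ℝ)/((n:ℝ)+1) - 2)*g, 3*g*((S:ℕ):ℝ) - 3*(t:ℝ)*g) (g, g)).1
                ≤ (((k:ℕ):ℝ)/((n:ℝ)+1) - 2)*g + g := hle
            linarith
end

section
/- In the subset-sum construction with β < −1: there exists a subset S' ⊆ {1,…,n} with Σ_{i∈S'} aᵢ = t if and only if there exists a sublist L of the training list v₁,…,vₙ,v_c,v_b,v_a such that the hinge fold over L starting from w⁰ ends at a parameter w with ⟨w, u⟩ ≥ 0. -/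
open Classical

lemma hstep_add' (β : ℝ) (w x : ℝ × ℝ) (h : dot2 w x < β) :
    hstep β w x = w + x := by simp only [hstep]; rw [if_pos h]

lemma hstep_keep' (β : ℝ) (w x : ℝ × ℝ) (h : ¬ dot2 w x < β) :
    hstep β w x = w := by simp only [hstep]; rw [if_neg h]

lemma foldl_fst_le' (β : ℝ) : ∀ (l : List (ℝ × ℝ)) (w : ℝ × ℝ),
    (l.foldl (hstep β) w).1 ≤ w.1 + (l.map (fun x => max x.1 0)).sum := by
  intro l
  induction l with
  | nil => simp
  | cons x l ih =>
    intro w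
    simp only [List.foldl_cons, List.map_cons, List.sum_cons]
    have h1 : (hstep β w x).1 ≤ w.1 + max x.1 0 := by
      simp only [hstep]
      split
      · simp only [Prod.fst_add]
        have := le_max_left x.1 (0:ℝ); linarith
      · have := le_max_right x.1 (0:ℝ); linarith
    have := ih (hstep β w x)
    linarith

lemma vphase' (β : ℝ) (hβ : β < -1) (n m : ℕ)
    (a : Fin n → ℕ) (M : ℝ)
    (hM : M = -β * (n + 2) + 9 * β ^ 2 * n * m ^ 2 * (n + 1) + 3)
    (v : Fin n → ℝ × ℝ)
    (hv : ∀ i, v i = (1 / ((n : ℝ) + 1), -3 * β * a i))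
    (ham : ∀ i, (a i : ℝ) ≤ m) :
    ∀ (l : List (Fin n)) (k P : ℕ),
      k + l.length ≤ n → P + (l.map a).sum ≤ n * m →
      (l.map v).foldl (hstep β) (-M + (k:ℝ) / ((n:ℝ)+1), -3 * β * (P:ℝ))
        = (-M + ((k + l.length : ℕ):ℝ) / ((n:ℝ)+1), -3 * β * ((P + (l.map a).sum : ℕ):ℝ)) := by
  intro l
  induction l with
  | nil => intro k P _ _; simp
  | cons i l ih =>
    intro k P hk hP
    have hN : (0:ℝ) < (n:ℝ) + 1 := by positivity
    have hm0 : (0:ℝ) ≤ (m:ℝ) := by positivity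
    have hkn : (k:ℝ) ≤ (n:ℝ) := by
      have : k ≤ n := by simp [List.length_cons] at hk; omega
      exact_mod_cast this
    have hPn : (P:ℝ) ≤ (n:ℝ) * m := by
      have : P ≤ n * m := by
        have := hP; simp [List.sum_cons] at this; omega
      exact_mod_cast this
    have hPa : (P:ℝ) * (a i : ℝ) ≤ (n:ℝ) * m * m := by
      have h0 : (0:ℝ) ≤ (P:ℝ) := by positivity
      have h1 : (0:ℝ) ≤ (a i : ℝ) := by positivity
      calc (P:ℝ) * (a i : ℝ) ≤ ((n:ℝ)*m) * (a i :ℝ) :=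
            mul_le_mul_of_nonneg_right hPn h1
        _ ≤ (n:ℝ)*m*m := by
            have : (0:ℝ) ≤ (n:ℝ)*m := by positivity
            exact mul_le_mul_of_nonneg_left (ham i) this
    have hlt : dot2 (-M + (k:ℝ) / ((n:ℝ)+1), -3 * β * (P:ℝ)) (v i) < β := by
      rw [hv i]
      simp only [dot2]
      have hkd : (k:ℝ)/((n:ℝ)+1) ≤ 1 := by
        rw [div_le_one hN]; linarith
      have h3 : (-M + (k:ℝ)/((n:ℝ)+1)) * (1/((n:ℝ)+1)) ≤ (-M + 1) * (1/((n:ℝ)+1)) := by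
        apply mul_le_mul_of_nonneg_right (by linarith) (by positivity)
      have h2 : (-3*β*(P:ℝ)) * (-3*β*(a i:ℝ)) ≤ 9*β^2*((n:ℝ)*m*m) := by
        have : (-3*β*(P:ℝ)) * (-3*β*(a i:ℝ)) = 9*β^2*((P:ℝ)*(a i:ℝ)) := by ring
        rw [this]
        have : (0:ℝ) ≤ 9*β^2 := by positivity
        exact mul_le_mul_of_nonneg_left hPa this
      have key : (-M + 1) - (β - 9*β^2*((n:ℝ)*m*m)) * ((n:ℝ)+1) = β - 2 := by
        rw [hM]; ring
      have h4 : (-M + 1) * (1/((n:ℝ)+1)) < β - 9*β^2*((n:ℝ)*m*m) := by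
        rw [mul_one_div, div_lt_iff₀ hN]
        nlinarith [key, hN]
      linarith
    simp only [List.map_cons, List.foldl_cons]
    rw [hstep_add' β _ _ hlt, hv i]
    have hstate : (-M + (k:ℝ) / ((n:ℝ)+1), -3 * β * (P:ℝ)) + (1 / ((n : ℝ) + 1), -3 * β * (a i:ℝ))
        = (-M + ((k+1:ℕ):ℝ) / ((n:ℝ)+1), -3 * β * ((P + a i :ℕ):ℝ)) := by
      rw [Prod.mk_add_mk, Prod.mk.injEq]
      push_cast
      constructor <;> ring
    rw [hstate, ih (k+1) (P + a i) (by simp [List.length_cons] at hk ⊢; omega)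
        (by simp [List.sum_cons] at hP ⊢; omega)]
    rw [show k + 1 + l.length = k + (i :: l).length from by simp [List.length_cons]; omega,
        show P + a i + (l.map a).sum = P + ((i::l).map a).sum from by simp [List.sum_cons]; omega]
    simp

set_option maxHeartbeats 2000000 in
/-- In the subset-sum construction with `β < -1`: there is a subset `S' ⊆ {1, …, n}`
with `Σ_{i ∈ S'} aᵢ = t` iff some sublist `L` of the training list
`v₁, …, vₙ, v_c, v_b, v_a` makes the hinge fold from `w⁰` end at `w` with `⟨w, u⟩ ≥ 0`. -/
theorem stmt9 (β : ℝ) (hβ : β < -1) (n m t : ℕ) (hn : 1 < n) (ht : 0 < t)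
    (a : Fin n → ℕ) (ha : ∀ i, 0 < a i) (hm : m = Finset.univ.sup a)
    (M : ℝ) (hM : M = -β * (n + 2) + 9 * β ^ 2 * n * m ^ 2 * (n + 1) + 3)
    (v : Fin n → ℝ × ℝ)
    (hv : ∀ i, v i = (1 / ((n : ℝ) + 1), -3 * β * a i))
    (vc vb va w0 u : ℝ × ℝ)
    (hvc : vc = (M + (3 / 2) * β - 1, β * (3 * t - 1 / 2)))
    (hvb : vb = (1, -1))
    (hva : va = (-(3 / 2) * β, -(3 / 2) * β))
    (hw0 : w0 = (-M, 0))
    (hu : u = (1, 0)) :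
    (∃ S' : Finset (Fin n), ∑ i ∈ S', a i = t) ↔
      (∃ L : List (ℝ × ℝ), L.Sublist (List.ofFn v ++ [vc, vb, va]) ∧
        0 ≤ dot2 (L.foldl (hstep β) w0) u) := by
  -- common facts
  have hN : (0:ℝ) < (n:ℝ)+1 := by positivity
  have hn2 : (2:ℝ) ≤ (n:ℝ) := by exact_mod_cast hn
  have hamn : ∀ i, a i ≤ m := fun i => hm ▸ Finset.le_sup (Finset.mem_univ i)
  have ham : ∀ i, (a i : ℝ) ≤ (m:ℝ) := fun i => by exact_mod_cast hamn i
  have hm1 : 1 ≤ m := le_trans (ha ⟨0, by omega⟩) (hamn ⟨0, by omega⟩)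
  have hm1' : (1:ℝ) ≤ (m:ℝ) := by exact_mod_cast hm1
  have ht1 : (1:ℝ) ≤ (t:ℝ) := by exact_mod_cast ht
  have hβ0 : β < 0 := by linarith
  have hPnn : (0:ℝ) ≤ 9 * β ^ 2 * n * m ^ 2 * (n + 1) := by positivity
  have hbn : (0:ℝ) < (-β) * ((n:ℝ)) := by
    apply mul_pos (by linarith); linarith
  have hMb : -M + 1 < β := by rw [hM]; nlinarith [hbn, hPnn]
  have hA : (1:ℝ) ≤ M + 3/2*β - 1 := by rw [hM]; nlinarith [hbn, hPnn]
  have hMd : 2 - 3/2*β < M := by rw [hM]; nlinarith [hbn, hPnn]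
  -- bound on total sum of a
  have hsum_univ : ∑ i, a i ≤ n * m := by
    calc ∑ i, a i ≤ Finset.univ.card • m :=
          Finset.sum_le_card_nsmul _ _ _ (fun i _ => hamn i)
      _ = n * m := by simp [Finset.card_univ]
  constructor
  · -- forward direction
    rintro ⟨S, hS⟩
    set l : List (Fin n) := (List.finRange n).filter (fun i => decide (i ∈ S)) with hl
    have hsubl : l.Sublist (List.finRange n) := List.filter_sublist
    have hnd : l.Nodup := hsubl.nodup (List.nodup_finRange n)
    have hTF : l.toFinset = S := by ext i; simp [hl]
    have hsum : (l.map a).sum = t := by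
      rw [← List.sum_toFinset a hnd, hTF, hS]
    have hlen : l.length ≤ n := by
      simpa using hsubl.length_le
    have htnm : t ≤ n * m := by
      calc t = ∑ i ∈ S, a i := hS.symm
        _ ≤ ∑ i, a i := Finset.sum_le_sum_of_subset (Finset.subset_univ S)
        _ ≤ n * m := hsum_univ
    refine ⟨(l.map v) ++ [vc, vb, va], ?_, ?_⟩
    · rw [List.ofFn_eq_map]
      exact (hsubl.map v).append (List.Sublist.refl _)
    · -- compute the fold
      set s := l.length with hls
      set σ : ℝ := (s:ℝ)/((n:ℝ)+1) with hσ
      have hσ0 : 0 ≤ σ := by positivity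
      have hσ1 : σ < 1 := by
        rw [hσ, div_lt_one hN]
        have : (s:ℝ) ≤ (n:ℝ) := by exact_mod_cast hlen
        linarith
      have hw0' : w0 = (-M + ((0:ℕ):ℝ)/((n:ℝ)+1), -3*β*((0:ℕ):ℝ)) := by
        rw [hw0]; norm_num
      have hfold1 : (l.map v).foldl (hstep β) w0 = (-M + σ, -3*β*(t:ℝ)) := by
        rw [hw0', vphase' β hβ n m a M hM v hv ham l 0 0 (by omega) (by omega)]
        rw [Nat.zero_add, Nat.zero_add, hsum]
      rw [List.foldl_append, hfold1]
      -- vc step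
      have hvcact : dot2 (-M + σ, -3*β*(t:ℝ)) vc < β := by
        rw [hvc]; simp only [dot2]
        have q1 : (-M + σ) * ((M + 3/2*β - 1) - 1) ≤ 0 :=
          mul_nonpos_of_nonpos_of_nonneg (by linarith) (by linarith)
        have q2 : (0:ℝ) ≤ β^2 * ((t:ℝ) * (3*(t:ℝ) - 1/2)) := by
          apply mul_nonneg (sq_nonneg β)
          apply mul_nonneg (by positivity)
          linarith
        nlinarith [q1, q2, hMb, hσ1]
      simp only [List.foldl_cons, List.foldl_nil]
      rw [hstep_add' β _ _ hvcact, hvc, Prod.mk_add_mk]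
      -- vb step
      have hvbact : dot2 (-M + σ + (M + 3/2*β - 1), -3*β*(t:ℝ) + β*(3*(t:ℝ) - 1/2)) vb < β := by
        rw [hvb]; simp only [dot2]
        linarith
      rw [hstep_add' β _ _ hvbact, hvb, Prod.mk_add_mk]
      -- va step
      have hvaact : dot2 (-M + σ + (M + 3/2*β - 1) + 1,
          -3*β*(t:ℝ) + β*(3*(t:ℝ) - 1/2) + -1) va < β := by
        rw [hva]; simp only [dot2]
        nlinarith [mul_nonneg (show (0:ℝ) ≤ -β by linarith) (show (0:ℝ) ≤ 1 - σ by linarith),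
          mul_pos (show (0:ℝ) < -β by linarith) (show (0:ℝ) < -(3/2)*β - 3/2 by linarith)]
      rw [hstep_add' β _ _ hvaact, hva, Prod.mk_add_mk, hu]
      simp only [dot2]
      norm_num
      linarith [hσ0]
  · -- reverse direction
    rintro ⟨L, hL, hw⟩
    rw [List.sublist_append_iff] at hL
    obtain ⟨L1, L2, rfl, h1, h2⟩ := hL
    rw [List.ofFn_eq_map, List.sublist_map_iff] at h1
    obtain ⟨l, hl, rfl⟩ := h1
    have hnd : l.Nodup := hl.nodup (List.nodup_finRange n)
    have hlen : l.length ≤ n := by simpa using hl.length_le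
    set T := (l.map a).sum with hT
    have hTnm : T + 0 ≤ n * m := by
      rw [hT, ← List.sum_toFinset a hnd]
      have h1' : l.toFinset.sum a ≤ ∑ i, a i :=
        Finset.sum_le_sum_of_subset (Finset.subset_univ _)
      omega
    set s := l.length with hls
    set σ : ℝ := (s:ℝ)/((n:ℝ)+1) with hσ
    have hσ0 : 0 ≤ σ := by positivity
    have hσ1 : σ < 1 := by
      rw [hσ, div_lt_one hN]
      have : (s:ℝ) ≤ (n:ℝ) := by exact_mod_cast hlen
      linarith
    have hw0' : w0 = (-M + ((0:ℕ):ℝ)/((n:ℝ)+1), -3*β*((0:ℕ):ℝ)) := by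
      rw [hw0]; norm_num
    have hfold1 : (l.map v).foldl (hstep β) w0 = (-M + σ, -3*β*(T:ℝ)) := by
      rw [hw0', vphase' β hβ n m a M hM v hv ham l 0 0 (by omega) (by omega)]
      rw [Nat.zero_add, Nat.zero_add]
    rw [List.foldl_append, hfold1, hu] at hw
    simp only [dot2, mul_one, mul_zero, add_zero] at hw
    -- hw : 0 ≤ (L2.foldl (hstep β) (-M + σ, -3*β*T)).1
    -- the conclusion once we know T = t
    have conclude : T = t → ∃ S' : Finset (Fin n), ∑ i ∈ S', a i = t := by
      intro hTt
      exact ⟨l.toFinset, by rw [List.sum_toFinset a hnd, ← hT, hTt]⟩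
    have hmax1 : max (1:ℝ) 0 = 1 := by norm_num
    have hmaxb : max (-(3/2)*β) (0:ℝ) = -(3/2)*β := max_eq_left (by linarith)
    rcases List.sublist_cons_iff.1 h2 with h2' | ⟨r1, rfl, h2'⟩
    · -- vc not in L2 : contradiction
      exfalso
      have hb := foldl_fst_le' β L2 (-M + σ, -3*β*(T:ℝ))
      have hs : (L2.map (fun x => max x.1 0)).sum ≤
          ([vb, va].map (fun x => max x.1 0)).sum := by
        apply List.Sublist.sum_le_sum (h2'.map _)
        intro x hx
        simp only [List.mem_map] at hx
        obtain ⟨y, _, rfl⟩ := hx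
        exact le_max_right _ _
      rw [hvb, hva] at hs
      simp only [List.map_cons, List.map_nil, List.sum_cons, List.sum_nil] at hs
      rw [hmax1, hmaxb] at hs
      simp only at hb
      linarith
    · -- vc first element of L2
      have hvcact : dot2 (-M + σ, -3*β*(T:ℝ)) vc < β := by
        rw [hvc]; simp only [dot2]
        have q1 : (-M + σ) * ((M + 3/2*β - 1) - 1) ≤ 0 :=
          mul_nonpos_of_nonpos_of_nonneg (by linarith) (by linarith)
        have q2 : (0:ℝ) ≤ β^2 * ((T:ℝ) * (3*(t:ℝ) - 1/2)) := by
          apply mul_nonneg (sq_nonneg β)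
          apply mul_nonneg (by positivity)
          linarith
        nlinarith [q1, q2, hMb, hσ1]
      simp only [List.foldl_cons] at hw
      rw [hstep_add' β _ _ hvcact, hvc, Prod.mk_add_mk] at hw
      -- state w2 = (-M + σ + (M + 3/2β - 1), -3βT + β(3t - 1/2))
      rcases List.sublist_cons_iff.1 h2' with h3 | ⟨r2, rfl, h3⟩
      · -- vb not in r1, r1 <+ [va]
        exfalso
        have hb := foldl_fst_le' β r1 (-M + σ + (M + 3/2*β - 1),
          -3*β*(T:ℝ) + β*(3*(t:ℝ) - 1/2))
        have hs : (r1.map (fun x => max x.1 0)).sum ≤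
            ([va].map (fun x => max x.1 0)).sum := by
          apply List.Sublist.sum_le_sum (h3.map _)
          intro x hx
          simp only [List.mem_map] at hx
          obtain ⟨y, _, rfl⟩ := hx
          exact le_max_right _ _
        rw [hva] at hs
        simp only [List.map_cons, List.map_nil, List.sum_cons, List.sum_nil] at hs
        rw [hmaxb] at hs
        simp only at hb
        linarith
      · -- r1 = vb :: r2, r2 <+ [va]
        by_cases hbact : dot2 (-M + σ + (M + 3/2*β - 1),
            -3*β*(T:ℝ) + β*(3*(t:ℝ) - 1/2)) vb < β
        · -- vb activated
          simp only [List.foldl_cons] at hw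
          rw [hstep_add' β _ _ hbact, hvb, Prod.mk_add_mk] at hw
          -- w3 = (-M + σ + (M + 3/2β - 1) + 1, -3βT + β(3t-1/2) + -1)
          rw [hvb] at hbact; simp only [dot2] at hbact
          rcases List.sublist_cons_iff.1 h3 with h4 | ⟨r3, rfl, h4⟩
          · -- va not in r2 : r2 = []
            exfalso
            rw [List.sublist_nil] at h4
            subst h4
            simp only [List.foldl_nil] at hw
            linarith
          · -- r2 = va :: r3, r3 = []
            rw [List.sublist_nil] at h4
            subst h4
            by_cases hvaact : dot2 (-M + σ + (M + 3/2*β - 1) + 1,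
                -3*β*(T:ℝ) + β*(3*(t:ℝ) - 1/2) + -1) va < β
            · -- both activated : extract T = t
              rw [hva] at hvaact; simp only [dot2] at hvaact
              apply conclude
              rcases Nat.lt_trichotomy T t with hc | hc | hc
              · exfalso
                have hc' : (T:ℝ) + 1 ≤ (t:ℝ) := by exact_mod_cast hc
                have hint : (0:ℝ) ≤ (-β) * ((t:ℝ) - T - 1) :=
                  mul_nonneg (by linarith) (by linarith)
                nlinarith [hbact, hint, hσ0]
              · exact hc
              · exfalso
                have hc' : (t:ℝ) + 1 ≤ (T:ℝ) := by exact_mod_cast hc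
                have hint : (0:ℝ) ≤ (-β) * ((T:ℝ) - t - 1) :=
                  mul_nonneg (by linarith) (by linarith)
                have hz : (0:ℝ) ≤ ((-M + σ + (M + 3/2*β - 1) + 1) +
                    (-3*β*(T:ℝ) + β*(3*(t:ℝ) - 1/2) + -1)) - 1 := by
                  nlinarith [hint, hσ0]
                have hint2 : (0:ℝ) ≤ (-β) * (((-M + σ + (M + 3/2*β - 1) + 1) +
                    (-3*β*(T:ℝ) + β*(3*(t:ℝ) - 1/2) + -1)) - 1) :=
                  mul_nonneg (by linarith) hz
                nlinarith [hvaact, hint2]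
            · -- va not activated
              exfalso
              simp only [List.foldl_cons, List.foldl_nil] at hw
              rw [hstep_keep' β _ _ hvaact] at hw
              simp only at hw
              linarith
        · -- vb not activated
          exfalso
          simp only [List.foldl_cons] at hw
          rw [hstep_keep' β _ _ hbact] at hw
          -- remaining r2 <+ [va]
          have hb := foldl_fst_le' β r2 (-M + σ + (M + 3/2*β - 1),
            -3*β*(T:ℝ) + β*(3*(t:ℝ) - 1/2))
          have hs : (r2.map (fun x => max x.1 0)).sum ≤
              ([va].map (fun x => max x.1 0)).sum := by
            apply List.Sublist.sum_le_sum (h3.map _)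
            intro x hx
            simp only [List.mem_map] at hx
            obtain ⟨y, _, rfl⟩ := hx
            exact le_max_right _ _
          rw [hva] at hs
          simp only [List.map_cons, List.map_nil, List.sum_cons, List.sum_nil] at hs
          rw [hmaxb] at hs
          simp only at hb
          linarith
end

section
/- In the SAT construction: for any T ⊆ T₀ and any order of epoch 1, for all 1 ≤ i ≤ n and 1 ≤ l ≤ |T|, if var(i) is among the first l samples processed in epoch 1 then w_{x_i}^{(1,l)} ∈ U(1, (l+1)/(6000N²)), and otherwise w_{x_i}^{(1,l)} ∈ U(−1, (l+1)/(6000N²)). -/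
open Classical

/-- Coordinate index set of `ℝ^N`, `N = n + 2m + 1`: coordinates `c₁, …, c_m`,
`x₁, …, xₙ`, `b₁, …, b_m`, and `dummy`. -/
abbrev SatIdx (n m : ℕ) := (Fin m ⊕ Fin n) ⊕ (Fin m ⊕ Unit)

/-- A gadget of the training data `T₀`: either `var(i)` or `clause(γ, i₁, i₂, i₃)`. -/
abbrev Gadget (n m : ℕ) := Fin n ⊕ Fin m

/-- The coordinate `c_γ`. -/
def cIdx (n m : ℕ) (γ : Fin m) : SatIdx n m := Sum.inl (Sum.inl γ)

/-- The coordinate `x_i`. -/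
def xIdx (n m : ℕ) (i : Fin n) : SatIdx n m := Sum.inl (Sum.inr i)

/-- The coordinate `b_γ`. -/
def bIdx (n m : ℕ) (γ : Fin m) : SatIdx n m := Sum.inr (Sum.inl γ)

/-- The coordinate `dummy`. -/
def dIdx (n m : ℕ) : SatIdx n m := Sum.inr (Sum.inr ())

/-- `N = n + 2m + 1`. -/
def Nval (n m : ℕ) : ℕ := n + 2 * m + 1

/-- The derivative factor `g` of the loss function: `g(s) = -12N/5` on `U(-5, 0.01)`,
`g(s) = -1` on `U(-1/2, 0.26)`, `g(s) = -1/(1000N)` on `U(±1, 0.01) ∪ U(±3, 0.01)`,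
and `g(s) = 0` otherwise. -/
noncomputable def gfun (n m : ℕ) (s : ℝ) : ℝ :=
  if |s - (-5)| < 0.01 then -(12 * (Nval n m : ℝ) / 5)
  else if |s - (-(1 : ℝ) / 2)| < 0.26 then -1
  else if |s - 1| < 0.01 ∨ |s - (-1)| < 0.01 ∨ |s - 3| < 0.01 ∨ |s - (-3)| < 0.01 then
    -(1 / (1000 * (Nval n m : ℝ)))
  else 0

/-- The learning rates: `η_{c_γ} = 5`, `η_{x_i} = 1/(6N)`, `η_{b_γ} = 2000N`,
`η_dummy = 1`. -/
noncomputable def eta (n m : ℕ) : SatIdx n m → ℝ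
  | Sum.inl (Sum.inl _) => 5
  | Sum.inl (Sum.inr _) => 1 / (6 * (Nval n m : ℝ))
  | Sum.inr (Sum.inl _) => 2000 * (Nval n m : ℝ)
  | Sum.inr (Sum.inr _) => 1

/-- The initial parameter: `w⁰_{c_γ} = 1/2`, `w⁰_{x_i} = -1`, `w⁰_{b_γ} = -1`,
`w⁰_dummy = 1`. -/
noncomputable def winit (n m : ℕ) : SatIdx n m → ℝ
  | Sum.inl (Sum.inl _) => 1 / 2
  | Sum.inl (Sum.inr _) => -1
  | Sum.inr (Sum.inl _) => -1
  | Sum.inr (Sum.inr _) => 1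

/-- Dot product on `ℝ^N`. -/
noncomputable def dotN (n m : ℕ) (w x : SatIdx n m → ℝ) : ℝ := ∑ j, w j * x j

/-- The input of the gadget `var(i)`: `x_{x_i} = 5`, all other coordinates `0`. -/
noncomputable def varX (n m : ℕ) (i : Fin n) : SatIdx n m → ℝ :=
  fun j => if j = xIdx n m i then 5 else 0

/-- The input of the gadget `clause(γ, i₁, i₂, i₃)`: `x_{c_γ} = 1`,
`x_{x_{i₁}} = x_{x_{i₂}} = x_{x_{i₃}} = 1`, `x_{b_γ} = 1/2`, all other coordinates `0`. -/
noncomputable def clauseX (n m : ℕ) (γ : Fin m) (i₁ i₂ i₃ : Fin n) : SatIdx n m → ℝ :=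
  fun j =>
    if j = cIdx n m γ then 1
    else if j = xIdx n m i₁ ∨ j = xIdx n m i₂ ∨ j = xIdx n m i₃ then 1
    else if j = bIdx n m γ then 1 / 2
    else 0

/-- The training sample `(x, y)` associated with a gadget (all labels are `1`). -/
noncomputable def gadgetSample (n m : ℕ) (cl : Fin m → Fin n × Fin n × Fin n) :
    Gadget n m → (SatIdx n m → ℝ) × ℝ
  | Sum.inl i => (varX n m i, 1)
  | Sum.inr γ => (clauseX n m γ (cl γ).1 (cl γ).2.1 (cl γ).2.2, 1)

/-- Processing a training sample `(x, y)` at parameter `w` updates each coordinate by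
`w_j ← w_j - η_j · g(y wᵀx) · y x_j`. -/
noncomputable def sgdStep (n m : ℕ) (cl : Fin m → Fin n × Fin n × Fin n)
    (w : SatIdx n m → ℝ) (gd : Gadget n m) : SatIdx n m → ℝ :=
  fun j => w j - eta n m j *
    gfun n m ((gadgetSample n m cl gd).2 * dotN n m w (gadgetSample n m cl gd).1) *
    ((gadgetSample n m cl gd).2 * (gadgetSample n m cl gd).1 j)

/-- `runEpochs n m cl os e` is the parameter `w^{(e)}` at the end of epoch `e`, where
epoch `e ≥ 1` processes the samples in the order given by the list `os e`, starting from
the initial parameter `w⁰`. -/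
noncomputable def runEpochs (n m : ℕ) (cl : Fin m → Fin n × Fin n × Fin n)
    (os : ℕ → List (Gadget n m)) : ℕ → SatIdx n m → ℝ
  | 0 => winit n m
  | e + 1 => (os (e + 1)).foldl (sgdStep n m cl) (runEpochs n m cl os e)

/-- Each clause is given by a triple of pairwise distinct variable indices. -/
def ClauseDistinct (n m : ℕ) (cl : Fin m → Fin n × Fin n × Fin n) : Prop :=
  ∀ γ : Fin m, (cl γ).1 ≠ (cl γ).2.1 ∧ (cl γ).1 ≠ (cl γ).2.2 ∧ (cl γ).2.1 ≠ (cl γ).2.2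

/-- Exactly one of three propositions holds. -/
def ExactlyOne (P Q R : Prop) : Prop :=
  (P ∧ ¬Q ∧ ¬R) ∨ (¬P ∧ Q ∧ ¬R) ∨ (¬P ∧ ¬Q ∧ R)

section Helpers

variable (n m : ℕ) (cl : Fin m → Fin n × Fin n × Fin n)

lemma Nreal_one_le : (1:ℝ) ≤ (Nval n m : ℝ) := by
  exact_mod_cast (by unfold Nval; omega : 1 ≤ Nval n m)

lemma Nreal_pos : (0:ℝ) < (Nval n m : ℝ) := lt_of_lt_of_le one_pos (Nreal_one_le n m)

lemma nm_le_N : ((n + m : ℕ) : ℝ) ≤ (Nval n m : ℝ) := by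
  exact_mod_cast (by unfold Nval; omega : n + m ≤ Nval n m)

lemma dot_varX (w : SatIdx n m → ℝ) (i : Fin n) :
    dotN n m w (varX n m i) = 5 * w (xIdx n m i) := by
  unfold dotN varX
  rw [Finset.sum_eq_single (xIdx n m i)]
  · simp [mul_comm]
  · intro b _ hb; simp [hb]
  · simp

lemma dot_clauseX (w : SatIdx n m → ℝ) (γ : Fin m) (i1 i2 i3 : Fin n)
    (h12 : i1 ≠ i2) (h13 : i1 ≠ i3) (h23 : i2 ≠ i3) :
    dotN n m w (clauseX n m γ i1 i2 i3) =
      w (cIdx n m γ) + w (xIdx n m i1) + w (xIdx n m i2) + w (xIdx n m i3)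
        + w (bIdx n m γ) * (1/2) := by
  have hfun : ∀ j, w j * clauseX n m γ i1 i2 i3 j =
      (if j = cIdx n m γ then w j else 0) + (if j = xIdx n m i1 then w j else 0)
      + (if j = xIdx n m i2 then w j else 0) + (if j = xIdx n m i3 then w j else 0)
      + (if j = bIdx n m γ then w j * (1/2) else 0) := by
    intro j
    unfold clauseX
    by_cases h1 : j = cIdx n m γ <;> by_cases h2 : j = xIdx n m i1 <;>
      by_cases h3 : j = xIdx n m i2 <;> by_cases h4 : j = xIdx n m i3 <;>
      by_cases h5 : j = bIdx n m γ <;>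
      simp_all [cIdx, xIdx, bIdx]
  unfold dotN
  simp only [hfun]
  rw [Finset.sum_add_distrib, Finset.sum_add_distrib, Finset.sum_add_distrib,
    Finset.sum_add_distrib]
  simp [Finset.sum_ite_eq']

end Helpers
section Helpers2

variable (n m : ℕ)

lemma gfun_at_var (s : ℝ) (h : |s - (-5)| < 0.01) :
    gfun n m s = -(12 * (Nval n m : ℝ) / 5) := by
  unfold gfun; rw [if_pos h]

lemma gfun_at_clause (s₀ e : ℝ)
    (h0 : s₀ = 1 ∨ s₀ = -1 ∨ s₀ = 3 ∨ s₀ = -3) (he0 : 0 ≤ e) (he : e < 0.01) :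
    gfun n m (s₀ + e) = -(1 / (1000 * (Nval n m : ℝ))) := by
  have f1 : ¬ |s₀ + e - (-5)| < 0.01 := by
    rcases h0 with h|h|h|h <;> subst h <;> rw [abs_lt] <;> push_neg <;>
      intro h' <;> norm_num <;> linarith
  have f2 : ¬ |s₀ + e - (-(1:ℝ)/2)| < 0.26 := by
    rcases h0 with h|h|h|h <;> subst h <;> rw [abs_lt] <;> push_neg <;>
      intro h' <;> norm_num <;> linarith
  have f3 : |s₀ + e - 1| < 0.01 ∨ |s₀ + e - (-1)| < 0.01 ∨ |s₀ + e - 3| < 0.01 ∨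
      |s₀ + e - (-3)| < 0.01 := by
    rcases h0 with h|h|h|h <;> subst h
    · left; rw [abs_lt]; constructor <;> linarith
    · right; left; rw [abs_lt]; constructor <;> linarith
    · right; right; left; rw [abs_lt]; constructor <;> linarith
    · right; right; right; rw [abs_lt]; constructor <;> linarith
  unfold gfun
  rw [if_neg f1, if_neg f2, if_pos f3]

end Helpers2
section Helpers3

variable (n m : ℕ) (cl : Fin m → Fin n × Fin n × Fin n)

lemma sgdStep_var (w : SatIdx n m → ℝ) (i0 : Fin n) (j : SatIdx n m) :
    sgdStep n m cl w (Sum.inl i0) j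
      = w j - eta n m j * gfun n m (dotN n m w (varX n m i0)) * varX n m i0 j := by
  simp [sgdStep, gadgetSample]

lemma sgdStep_clause (w : SatIdx n m → ℝ) (γ0 : Fin m) (j : SatIdx n m) :
    sgdStep n m cl w (Sum.inr γ0) j
      = w j - eta n m j *
          gfun n m (dotN n m w (clauseX n m γ0 (cl γ0).1 (cl γ0).2.1 (cl γ0).2.2)) *
          clauseX n m γ0 (cl γ0).1 (cl γ0).2.1 (cl γ0).2.2 j := by
  simp [sgdStep, gadgetSample]

lemma varX_xIdx (i0 i : Fin n) :
    varX n m i0 (xIdx n m i) = if i = i0 then 5 else 0 := by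
  by_cases h : i = i0 <;> simp [varX, xIdx, h]

lemma varX_cIdx (i0 : Fin n) (γ : Fin m) : varX n m i0 (cIdx n m γ) = 0 := by
  simp [varX, xIdx, cIdx]

lemma varX_bIdx (i0 : Fin n) (γ : Fin m) : varX n m i0 (bIdx n m γ) = 0 := by
  simp [varX, xIdx, bIdx]

lemma clauseX_xIdx (γ0 : Fin m) (i1 i2 i3 i : Fin n) :
    clauseX n m γ0 i1 i2 i3 (xIdx n m i)
      = if i = i1 ∨ i = i2 ∨ i = i3 then 1 else 0 := by
  by_cases h : i = i1 ∨ i = i2 ∨ i = i3 <;> simp_all [clauseX, cIdx, xIdx, bIdx]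

lemma clauseX_cIdx (γ0 γ : Fin m) (h : γ ≠ γ0) (i1 i2 i3 : Fin n) :
    clauseX n m γ0 i1 i2 i3 (cIdx n m γ) = 0 := by
  simp [clauseX, cIdx, xIdx, bIdx, h]

lemma clauseX_bIdx (γ0 γ : Fin m) (h : γ ≠ γ0) (i1 i2 i3 : Fin n) :
    clauseX n m γ0 i1 i2 i3 (bIdx n m γ) = 0 := by
  simp [clauseX, cIdx, xIdx, bIdx, h]

lemma eta_xIdx (i : Fin n) : eta n m (xIdx n m i) = 1 / (6 * (Nval n m : ℝ)) := rfl

lemma pm_ite (P : Prop) [Decidable P] :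
    (if P then (1:ℝ) else -1) = 1 ∨ (if P then (1:ℝ) else -1) = -1 := by
  split <;> simp

/-- Whether a gadget is a clause containing variable `i`. -/
def hits (i : Fin n) : Gadget n m → Bool
  | Sum.inl _ => false
  | Sum.inr γ => decide (i = (cl γ).1 ∨ i = (cl γ).2.1 ∨ i = (cl γ).2.2)

end Helpers3
/-- List membership is decidable given decidable equality (workaround for a stuck
`LawfulBEq` instance on sum types). -/
instance gadgetMemDec {α : Type*} [DecidableEq α] (x : α) (L : List α) :
    Decidable (x ∈ L) :=
  decidable_of_iff (∃ y ∈ L, y = x) (by simp)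
section KeyLemma

variable (n m : ℕ) (cl : Fin m → Fin n × Fin n × Fin n)

lemma key_s11 (hcl : ClauseDistinct n m cl) (L : List (Gadget n m)) (hnd : L.Nodup)
    (hlen : L.length ≤ n + m) :
    (∀ i : Fin n, (L.foldl (sgdStep n m cl) (winit n m)) (xIdx n m i)
        = (if (Sum.inl i : Gadget n m) ∈ L then (1:ℝ) else -1)
          + (L.countP (hits n m cl i) : ℝ) / (6000 * (Nval n m : ℝ)^2))
    ∧ (∀ γ : Fin m, Sum.inr γ ∉ L →
        (L.foldl (sgdStep n m cl) (winit n m)) (cIdx n m γ) = 1/2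
        ∧ (L.foldl (sgdStep n m cl) (winit n m)) (bIdx n m γ) = -1) := by
  induction L using List.reverseRecOn with
  | nil => simp [winit, xIdx, cIdx, bIdx]
  | append_singleton L a ih =>
    have hndL : L.Nodup := hnd.sublist (List.sublist_append_left _ _)
    have haL : a ∉ L := by
      intro hmem
      exact (List.disjoint_of_nodup_append hnd) hmem (by simp)
    have hlenL : L.length ≤ n + m := by
      simp only [List.length_append, List.length_singleton] at hlen; omega
    obtain ⟨ih1, ih2⟩ := ih hndL hlenL
    have hN1 := Nreal_one_le n m
    have hNpos := Nreal_pos n m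
    have hDpos : (0:ℝ) < 6000 * (Nval n m : ℝ)^2 := by positivity
    have hcast_len : (L.length : ℝ) ≤ (Nval n m : ℝ) := by
      calc (L.length : ℝ) ≤ ((n + m : ℕ) : ℝ) := by exact_mod_cast hlenL
        _ ≤ _ := nm_le_N n m
    simp only [List.foldl_append, List.foldl_cons, List.foldl_nil]
    set w := L.foldl (sgdStep n m cl) (winit n m) with hw
    rcases a with i0 | γ0
    · -- processing var(i0)
      have hwx : w (xIdx n m i0)
          = -1 + (L.countP (hits n m cl i0) : ℝ) / (6000 * (Nval n m : ℝ)^2) := by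
        rw [ih1 i0, if_neg haL]
      have hkN : ((L.countP (hits n m cl i0) : ℕ) : ℝ) ≤ (Nval n m : ℝ) :=
        le_trans (by exact_mod_cast List.countP_le_length) hcast_len
      have hk0 : (0:ℝ) ≤ ((L.countP (hits n m cl i0) : ℕ) : ℝ) := Nat.cast_nonneg _
      have habs : |dotN n m w (varX n m i0) - (-5)| < 0.01 := by
        rw [dot_varX, hwx]
        have h1 : (0:ℝ) ≤ 5 * (-1 + (L.countP (hits n m cl i0) : ℝ)
            / (6000 * (Nval n m : ℝ)^2)) - (-5) := by
          have : (0:ℝ) ≤ (L.countP (hits n m cl i0) : ℝ) / (6000 * (Nval n m : ℝ)^2) :=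
            div_nonneg hk0 hDpos.le
          linarith
        rw [abs_of_nonneg h1]
        have h2 : (L.countP (hits n m cl i0) : ℝ) / (6000 * (Nval n m : ℝ)^2)
            < 0.002 / 5 := by
          rw [div_lt_div_iff₀ hDpos (by norm_num)]
          nlinarith
        linarith
      have hg : gfun n m (dotN n m w (varX n m i0)) = -(12 * (Nval n m : ℝ) / 5) :=
        gfun_at_var n m _ habs
      constructor
      · intro i
        rw [sgdStep_var, hg, varX_xIdx]
        have hcnt : (L ++ [Sum.inl i0]).countP (hits n m cl i)
            = L.countP (hits n m cl i) := by
          rw [List.countP_append]; simp [hits]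
        rw [hcnt]
        by_cases hii : i = i0
        · subst hii
          rw [if_pos rfl, eta_xIdx, hwx, if_pos (by simp : Sum.inl i ∈ L ++ [Sum.inl i])]
          field_simp
          ring
        · rw [if_neg hii, mul_zero, sub_zero, ih1 i]
          have hmm : (Sum.inl i ∈ L ++ [Sum.inl i0]) ↔ Sum.inl i ∈ L := by simp [hii]
          simp only [hmm]
      · intro γ hγ
        have hγL : Sum.inr γ ∉ L := fun h => hγ (by simp [h])
        constructor
        · rw [sgdStep_var, varX_cIdx, mul_zero, sub_zero]; exact (ih2 γ hγL).1
        · rw [sgdStep_var, varX_bIdx, mul_zero, sub_zero]; exact (ih2 γ hγL).2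
    · -- processing clause(γ0)
      obtain ⟨hd12, hd13, hd23⟩ := hcl γ0
      obtain ⟨hc, hb⟩ := ih2 γ0 haL
      have hx1 := ih1 (cl γ0).1
      have hx2 := ih1 (cl γ0).2.1
      have hx3 := ih1 (cl γ0).2.2
      have hk1N : ((L.countP (hits n m cl (cl γ0).1) : ℕ) : ℝ) ≤ (Nval n m : ℝ) :=
        le_trans (by exact_mod_cast List.countP_le_length) hcast_len
      have hk2N : ((L.countP (hits n m cl (cl γ0).2.1) : ℕ) : ℝ) ≤ (Nval n m : ℝ) :=
        le_trans (by exact_mod_cast List.countP_le_length) hcast_len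
      have hk3N : ((L.countP (hits n m cl (cl γ0).2.2) : ℕ) : ℝ) ≤ (Nval n m : ℝ) :=
        le_trans (by exact_mod_cast List.countP_le_length) hcast_len
      have hdot : dotN n m w (clauseX n m γ0 (cl γ0).1 (cl γ0).2.1 (cl γ0).2.2)
          = ((if Sum.inl (cl γ0).1 ∈ L then (1:ℝ) else -1)
              + (if Sum.inl (cl γ0).2.1 ∈ L then (1:ℝ) else -1)
              + (if Sum.inl (cl γ0).2.2 ∈ L then (1:ℝ) else -1))
            + (((L.countP (hits n m cl (cl γ0).1) : ℝ)
              + (L.countP (hits n m cl (cl γ0).2.1) : ℝ)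
              + (L.countP (hits n m cl (cl γ0).2.2) : ℝ)) / (6000 * (Nval n m : ℝ)^2)) := by
        rw [dot_clauseX n m w γ0 _ _ _ hd12 hd13 hd23, hc, hb, hx1, hx2, hx3]
        ring
      set S : ℝ := ((if Sum.inl (cl γ0).1 ∈ L then (1:ℝ) else -1)
              + (if Sum.inl (cl γ0).2.1 ∈ L then (1:ℝ) else -1)
              + (if Sum.inl (cl γ0).2.2 ∈ L then (1:ℝ) else -1)) with hS
      have h0 : S = 1 ∨ S = -1 ∨ S = 3 ∨ S = -3 := by
        rw [hS]
        rcases pm_ite (Sum.inl (cl γ0).1 ∈ L) with h1|h1 <;>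
          rcases pm_ite (Sum.inl (cl γ0).2.1 ∈ L) with h2|h2 <;>
          rcases pm_ite (Sum.inl (cl γ0).2.2 ∈ L) with h3|h3 <;>
          rw [h1, h2, h3] <;> norm_num
      have he0 : (0:ℝ) ≤ ((L.countP (hits n m cl (cl γ0).1) : ℝ)
              + (L.countP (hits n m cl (cl γ0).2.1) : ℝ)
              + (L.countP (hits n m cl (cl γ0).2.2) : ℝ)) / (6000 * (Nval n m : ℝ)^2) := by
        positivity
      have he : (((L.countP (hits n m cl (cl γ0).1) : ℝ)
              + (L.countP (hits n m cl (cl γ0).2.1) : ℝ)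
              + (L.countP (hits n m cl (cl γ0).2.2) : ℝ)) / (6000 * (Nval n m : ℝ)^2))
            < 0.01 := by
        rw [div_lt_iff₀ hDpos]
        nlinarith
      have hg : gfun n m (dotN n m w (clauseX n m γ0 (cl γ0).1 (cl γ0).2.1 (cl γ0).2.2))
          = -(1 / (1000 * (Nval n m : ℝ))) := by
        rw [hdot]
        exact gfun_at_clause n m _ _ h0 he0 he
      constructor
      · intro i
        rw [sgdStep_clause, hg, clauseX_xIdx, eta_xIdx]
        have hmm : (Sum.inl i ∈ L ++ [Sum.inr γ0]) ↔ Sum.inl i ∈ L := by simp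
        simp only [hmm]
        by_cases hhit : i = (cl γ0).1 ∨ i = (cl γ0).2.1 ∨ i = (cl γ0).2.2
        · have hcnt : (L ++ [Sum.inr γ0]).countP (hits n m cl i)
              = L.countP (hits n m cl i) + 1 := by
            rw [List.countP_append]; simp [hits, hhit]
          rw [if_pos hhit, hcnt, ih1 i]
          push_cast
          field_simp
          ring
        · have hcnt : (L ++ [Sum.inr γ0]).countP (hits n m cl i)
              = L.countP (hits n m cl i) := by
            rw [List.countP_append]; simp [hits, hhit]
          rw [if_neg hhit, mul_zero, sub_zero, hcnt, ih1 i]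
      · intro γ hγ
        have hγL : Sum.inr γ ∉ L := fun h => hγ (by simp [h])
        have hne : γ ≠ γ0 := by
          intro h; subst h; exact hγ (by simp)
        constructor
        · rw [sgdStep_clause, clauseX_cIdx n m _ _ hne, mul_zero, sub_zero]
          exact (ih2 γ hγL).1
        · rw [sgdStep_clause, clauseX_bIdx n m _ _ hne, mul_zero, sub_zero]
          exact (ih2 γ hγL).2

end KeyLemma

/-- In the SAT construction: for any `T ⊆ T₀`, any order of epoch 1, all `1 ≤ i ≤ n` and
`1 ≤ l ≤ |T|`: if `var(i)` is among the first `l` samples processed in epoch 1 then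
`w_{x_i}^{(1,l)} ∈ U(1, (l+1)/(6000 N²))`, otherwise
`w_{x_i}^{(1,l)} ∈ U(-1, (l+1)/(6000 N²))`. -/
theorem stmt11 (n m : ℕ) (cl : Fin m → Fin n × Fin n × Fin n)
    (hcl : ClauseDistinct n m cl)
    (T : Finset (Gadget n m)) (os : ℕ → List (Gadget n m))
    (hos : ∀ e, 1 ≤ e → List.Perm (os e) T.toList)
    (i : Fin n) (l : ℕ) (hl1 : 1 ≤ l) (hl : l ≤ T.card) :
    (Sum.inl i ∈ (os 1).take l →
      |(((os 1).take l).foldl (sgdStep n m cl) (winit n m)) (xIdx n m i) - 1|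
        < ((l : ℝ) + 1) / (6000 * (Nval n m : ℝ) ^ 2)) ∧
    (Sum.inl i ∉ (os 1).take l →
      |(((os 1).take l).foldl (sgdStep n m cl) (winit n m)) (xIdx n m i) - (-1)|
        < ((l : ℝ) + 1) / (6000 * (Nval n m : ℝ) ^ 2)) := by
  have hperm := hos 1 le_rfl
  have hnodupos : (os 1).Nodup := (hperm.nodup_iff).mpr T.nodup_toList
  set L := (os 1).take l with hL
  have hnd : L.Nodup := hnodupos.sublist (List.take_sublist _ _)
  have hlenle : L.length ≤ l := by
    rw [hL, List.length_take]; exact min_le_left _ _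
  have hlen_nm : L.length ≤ n + m := by
    have h1 : L.length ≤ (os 1).length := (List.take_sublist _ _).length_le
    have h2 : (os 1).length = T.card := by rw [hperm.length_eq, Finset.length_toList]
    have h3 : T.card ≤ n + m := by
      have h4 := Finset.card_le_univ T
      have h5 : Fintype.card (Gadget n m) = n + m := by
        simp [Fintype.card_sum]
      omega
    omega
  obtain ⟨key1, _⟩ := key_s11 n m cl hcl L hnd hlen_nm
  have hNpos := Nreal_pos n m
  have hDpos : (0:ℝ) < 6000 * (Nval n m : ℝ)^2 := by positivity
  have hcnt : ((L.countP (hits n m cl i)) : ℝ) ≤ (l : ℝ) := by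
    exact_mod_cast le_trans (List.countP_le_length) hlenle
  have hkey : (L.countP (hits n m cl i) : ℝ) / (6000 * (Nval n m : ℝ)^2)
      < ((l : ℝ) + 1) / (6000 * (Nval n m : ℝ)^2) := by
    rw [div_lt_div_iff₀ hDpos hDpos]
    nlinarith
  constructor
  · intro hmem
    rw [key1 i, if_pos hmem]
    have heq : (1:ℝ) + (L.countP (hits n m cl i) : ℝ) / (6000 * (Nval n m : ℝ)^2) - 1
        = (L.countP (hits n m cl i) : ℝ) / (6000 * (Nval n m : ℝ)^2) := by ring
    rw [heq, abs_of_nonneg (by positivity)]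
    exact hkey
  · intro hmem
    rw [key1 i, if_neg hmem]
    have heq : (-1:ℝ) + (L.countP (hits n m cl i) : ℝ) / (6000 * (Nval n m : ℝ)^2) - (-1)
        = (L.countP (hits n m cl i) : ℝ) / (6000 * (Nval n m : ℝ)^2) := by ring
    rw [heq, abs_of_nonneg (by positivity)]
    exact hkey
end

section
/- In the SAT construction: for any T ⊆ T₀ and any order of epoch 1, for all 1 ≤ i ≤ n, if var(i) ∈ T then w_{x_i}^{(1)} ∈ U(1, 1/(6000N)), and otherwise w_{x_i}^{(1)} ∈ U(−1, 1/(6000N)). -/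
open Classical

-- auxiliary lemmas

noncomputable def eps (n m : ℕ) : ℝ := 1 / (6000 * (Nval n m : ℝ)^2)

lemma Nr_pos (n m : ℕ) : (1:ℝ) ≤ (Nval n m : ℝ) := by
  have : 1 ≤ Nval n m := by unfold Nval; omega
  exact_mod_cast this

lemma m_lt_Nr (n m : ℕ) : (m:ℝ) < (Nval n m : ℝ) := by
  have : m < Nval n m := by unfold Nval; omega
  exact_mod_cast this

lemma eps_pos (n m : ℕ) : 0 < eps n m := by
  have h := Nr_pos n m; unfold eps; positivity

lemma cardRight (n m : ℕ) (S : Finset (Gadget n m)) :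
    (S.filter (fun g => g.isRight)).card ≤ m := by
  have hsub : (S.filter (fun g => g.isRight)) ⊆
      (Finset.univ : Finset (Fin m)).image Sum.inr := by
    intro g hg
    rcases g with i | γ
    · simp [Finset.mem_filter] at hg
    · simp
  calc (S.filter (fun g => g.isRight)).card
      ≤ ((Finset.univ : Finset (Fin m)).image Sum.inr).card := Finset.card_le_card hsub
    _ ≤ (Finset.univ : Finset (Fin m)).card := Finset.card_image_le
    _ = m := by simp

lemma keps_le (n m : ℕ) (S : Finset (Gadget n m)) :
    ((S.filter (fun g => g.isRight)).card : ℝ) * eps n m ≤ 1/6000 := by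
  have hk : ((S.filter (fun g => g.isRight)).card : ℝ) ≤ m := by
    exact_mod_cast cardRight n m S
  have hm := (m_lt_Nr n m).le
  have hN := Nr_pos n m
  unfold eps
  rw [mul_div_assoc']
  rw [div_le_div_iff₀ (by positivity) (by norm_num)]
  nlinarith

lemma keps_lt (n m : ℕ) (S : Finset (Gadget n m)) :
    ((S.filter (fun g => g.isRight)).card : ℝ) * eps n m < 1 / (6000 * (Nval n m : ℝ)) := by
  have hk : ((S.filter (fun g => g.isRight)).card : ℝ) ≤ m := by
    exact_mod_cast cardRight n m S
  have hm := m_lt_Nr n m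
  have hN := Nr_pos n m
  have he := eps_pos n m
  have h1 : ((S.filter (fun g => g.isRight)).card : ℝ) * eps n m
      < (Nval n m : ℝ) * eps n m := by
    apply mul_lt_mul_of_pos_right _ he
    linarith
  have h2 : (Nval n m : ℝ) * eps n m = 1 / (6000 * (Nval n m : ℝ)) := by
    unfold eps; field_simp
  linarith [h1, h2.le, h2.ge]

lemma dot_var (n m : ℕ) (w : SatIdx n m → ℝ) (i : Fin n) :
    dotN n m w (varX n m i) = w (xIdx n m i) * 5 := by
  unfold dotN varX
  rw [Finset.sum_eq_single (xIdx n m i)]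
  · simp
  · intro b _ hb; simp [hb]
  · simp

lemma dot_clause (n m : ℕ) (w : SatIdx n m → ℝ) (γ : Fin m) (i₁ i₂ i₃ : Fin n)
    (h12 : i₁ ≠ i₂) (h13 : i₁ ≠ i₃) (h23 : i₂ ≠ i₃) :
    dotN n m w (clauseX n m γ i₁ i₂ i₃) =
      w (cIdx n m γ) + (w (xIdx n m i₁) + w (xIdx n m i₂) + w (xIdx n m i₃))
        + w (bIdx n m γ) * (1/2) := by
  have hx : ∀ j, clauseX n m γ i₁ i₂ i₃ j =
      (if j = cIdx n m γ then (1:ℝ) else 0) + ((if j = xIdx n m i₁ then 1 else 0)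
      + (if j = xIdx n m i₂ then 1 else 0) + (if j = xIdx n m i₃ then 1 else 0))
      + (if j = bIdx n m γ then 1/2 else 0) := by
    intro j
    unfold clauseX cIdx xIdx bIdx
    rcases j with (γ' | i') | (γ' | u)
    · simp
    · simp only [Sum.inl.injEq, Sum.inr.injEq, reduceCtorEq, if_false, add_zero, zero_add]
      by_cases h1 : i' = i₁ <;> by_cases h2 : i' = i₂ <;> by_cases h3 : i' = i₃ <;>
        simp_all
    · simp
    · simp
  unfold dotN
  simp only [hx, mul_add, Finset.sum_add_distrib, mul_ite, mul_one, mul_zero,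
    Fintype.sum_ite_eq']
lemma gfun_at_m5 (n m : ℕ) (s : ℝ) (h : |s + 5| < 0.01) :
    gfun n m s = -(12 * (Nval n m : ℝ) / 5) := by
  unfold gfun
  rw [if_pos (by rw [sub_neg_eq_add]; exact h)]

lemma gfun_small (n m : ℕ) (s s₀ : ℝ)
    (hs₀ : s₀ = 1 ∨ s₀ = -1 ∨ s₀ = 3 ∨ s₀ = -3) (h : |s - s₀| < 0.01) :
    gfun n m s = -(1 / (1000 * (Nval n m : ℝ))) := by
  rw [abs_lt] at h
  unfold gfun
  rcases hs₀ with rfl | rfl | rfl | rfl <;>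
    [ (rw [if_neg, if_neg, if_pos (Or.inl (by rw [abs_lt]; constructor <;> linarith))]);
      (rw [if_neg, if_neg, if_pos (Or.inr (Or.inl (by rw [abs_lt]; constructor <;> linarith)))]);
      (rw [if_neg, if_neg, if_pos (Or.inr (Or.inr (Or.inl (by rw [abs_lt]; constructor <;> linarith))))]);
      (rw [if_neg, if_neg, if_pos (Or.inr (Or.inr (Or.inr (by rw [abs_lt]; constructor <;> linarith))))]) ] <;>
    (rw [abs_lt]; push_neg; intro h1; norm_num at h1 ⊢; try linarith) <;> linarith
def SatInv (n m : ℕ) (S : Finset (Gadget n m)) (w : SatIdx n m → ℝ) : Prop :=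
  (∀ γ : Fin m, Sum.inr γ ∉ S → w (cIdx n m γ) = 1/2 ∧ w (bIdx n m γ) = -1) ∧
  ∀ i : Fin n, |w (xIdx n m i) - (if Sum.inl i ∈ S then 1 else -1)| ≤
    ((S.filter (fun g => g.isRight)).card : ℝ) * eps n m

lemma step_inv (n m : ℕ) (cl : Fin m → Fin n × Fin n × Fin n)
    (hcl : ClauseDistinct n m cl) (S : Finset (Gadget n m)) (w : SatIdx n m → ℝ)
    (gd : Gadget n m) (hgd : gd ∉ S) (hI : SatInv n m S w) :
    SatInv n m (insert gd S) (sgdStep n m cl w gd) := by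
  have hke := keps_le n m S
  have heps := eps_pos n m
  have hN := Nr_pos n m
  have hN0 : (Nval n m : ℝ) ≠ 0 := by linarith
  set k : ℝ := ((S.filter (fun g => g.isRight)).card : ℝ) with hkdef
  have hk0 : 0 ≤ k := Nat.cast_nonneg _
  rcases gd with i | γ
  · -- var(i)
    have hx := hI.2 i
    rw [if_neg (fun h => hgd h)] at hx
    rw [abs_le] at hx
    have hs : (1:ℝ) * dotN n m w (varX n m i) = w (xIdx n m i) * 5 := by
      rw [one_mul, dot_var]
    have hg : gfun n m ((1:ℝ) * dotN n m w (varX n m i)) = -(12 * (Nval n m : ℝ) / 5) := by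
      rw [hs]
      apply gfun_at_m5
      rw [abs_lt]
      constructor <;> nlinarith
    have hfilter : ((insert (Sum.inl i : Gadget n m) S).filter (fun g => g.isRight)) =
        S.filter (fun g => g.isRight) := by
      rw [Finset.filter_insert, if_neg (by simp)]
    constructor
    · intro γ hγ
      have hγS : Sum.inr γ ∉ S := fun h => hγ (Finset.mem_insert_of_mem h)
      have hc := hI.1 γ hγS
      simp only [sgdStep, gadgetSample]
      have h1 : varX n m i (cIdx n m γ) = 0 := by simp [varX, cIdx, xIdx]
      have h2 : varX n m i (bIdx n m γ) = 0 := by simp [varX, bIdx, xIdx]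
      rw [h1, h2]
      constructor <;> [skip; skip] <;> simp [hc.1, hc.2]
    · intro i'
      rw [hfilter]
      by_cases hii : i' = i
      · subst hii
        simp only [sgdStep, gadgetSample]
        have h1 : varX n m i' (xIdx n m i') = 5 := by simp [varX]
        rw [h1, hg, if_pos (Finset.mem_insert_self _ _)]
        have heta : eta n m (xIdx n m i') = 1 / (6 * (Nval n m : ℝ)) := rfl
        rw [heta]
        have : w (xIdx n m i') - 1 / (6 * (Nval n m : ℝ)) * -(12 * (Nval n m : ℝ) / 5) * (1 * 5)
            - 1 = w (xIdx n m i') - -1 := by field_simp; ring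
        rw [this]
        rw [abs_le]; constructor <;> linarith
      · simp only [sgdStep, gadgetSample]
        have h1 : varX n m i (xIdx n m i') = 0 := by
          simp [varX, xIdx, hii]
        rw [h1]
        have hmem : (Sum.inl i' ∈ insert (Sum.inl i : Gadget n m) S) ↔ Sum.inl i' ∈ S := by
          simp [Finset.mem_insert, hii]
        simp only [hmem]
        simpa using hI.2 i'
  · -- clause γ
    obtain ⟨h12, h13, h23⟩ := hcl γ
    have hcb := hI.1 γ hgd
    have hx1 := hI.2 (cl γ).1
    have hx2 := hI.2 (cl γ).2.1
    have hx3 := hI.2 (cl γ).2.2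
    set t1 : ℝ := if Sum.inl (cl γ).1 ∈ S then 1 else -1 with ht1def
    set t2 : ℝ := if Sum.inl (cl γ).2.1 ∈ S then 1 else -1 with ht2def
    set t3 : ℝ := if Sum.inl (cl γ).2.2 ∈ S then 1 else -1 with ht3def
    have ht1 : t1 = 1 ∨ t1 = -1 := by rw [ht1def]; split_ifs <;> simp
    have ht2 : t2 = 1 ∨ t2 = -1 := by rw [ht2def]; split_ifs <;> simp
    have ht3 : t3 = 1 ∨ t3 = -1 := by rw [ht3def]; split_ifs <;> simp
    rw [abs_le] at hx1 hx2 hx3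
    have hsamp : gadgetSample n m cl (Sum.inr γ) =
        (clauseX n m γ (cl γ).1 (cl γ).2.1 (cl γ).2.2, 1) := rfl
    have hdot : dotN n m w (clauseX n m γ (cl γ).1 (cl γ).2.1 (cl γ).2.2) =
        w (xIdx n m (cl γ).1) + w (xIdx n m (cl γ).2.1) + w (xIdx n m (cl γ).2.2) := by
      rw [dot_clause n m w γ _ _ _ h12 h13 h23, hcb.1, hcb.2]; ring
    have hg : gfun n m ((1:ℝ) * dotN n m w (clauseX n m γ (cl γ).1 (cl γ).2.1 (cl γ).2.2)) =
        -(1 / (1000 * (Nval n m : ℝ))) := by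
      rw [one_mul, hdot]
      apply gfun_small n m _ (t1 + t2 + t3)
      · rcases ht1 with h | h <;> rcases ht2 with h' | h' <;> rcases ht3 with h'' | h'' <;>
          rw [h, h', h''] <;> norm_num
      · rw [abs_lt]; constructor <;> nlinarith
    have hfilter : (((insert (Sum.inr γ : Gadget n m) S).filter (fun g => g.isRight)).card : ℝ)
        = k + 1 := by
      rw [Finset.filter_insert, if_pos (by simp), Finset.card_insert_of_notMem
        (fun h => hgd (Finset.mem_filter.1 h).1)]
      push_cast; ring
    constructor
    · intro γ' hγ'
      have hne : γ' ≠ γ := by rintro rfl; exact hγ' (Finset.mem_insert_self _ _)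
      have hγS : Sum.inr γ' ∉ S := fun h => hγ' (Finset.mem_insert_of_mem h)
      have hc := hI.1 γ' hγS
      simp only [sgdStep, hsamp]
      have h1 : clauseX n m γ (cl γ).1 (cl γ).2.1 (cl γ).2.2 (cIdx n m γ') = 0 := by
        simp [clauseX, cIdx, xIdx, bIdx, hne]
      have h2 : clauseX n m γ (cl γ).1 (cl γ).2.1 (cl γ).2.2 (bIdx n m γ') = 0 := by
        simp [clauseX, cIdx, xIdx, bIdx, hne]
      rw [h1, h2]
      constructor <;> simp [hc.1, hc.2]
    · intro i'
      rw [hfilter]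
      have hmem : (Sum.inl i' ∈ insert (Sum.inr γ : Gadget n m) S) ↔ Sum.inl i' ∈ S := by
        simp [Finset.mem_insert]
      simp only [hmem]
      simp only [sgdStep, hsamp]
      have hb := hI.2 i'
      by_cases hi' : i' = (cl γ).1 ∨ i' = (cl γ).2.1 ∨ i' = (cl γ).2.2
      · have h1 : clauseX n m γ (cl γ).1 (cl γ).2.1 (cl γ).2.2 (xIdx n m i') = 1 := by
          simp only [clauseX]
          rw [if_neg (by simp [cIdx, xIdx]), if_pos]
          rcases hi' with h | h | h <;> [exact Or.inl (by rw [h]);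
            exact Or.inr (Or.inl (by rw [h])); exact Or.inr (Or.inr (by rw [h]))]
        rw [h1, hg]
        have heta : eta n m (xIdx n m i') = 1 / (6 * (Nval n m : ℝ)) := rfl
        rw [heta]
        have hval : 1 / (6 * (Nval n m : ℝ)) * -(1 / (1000 * (Nval n m : ℝ))) * (1 * 1)
            = -eps n m := by
          unfold eps; field_simp; ring
        rw [hval]
        rw [abs_le] at hb ⊢
        constructor <;> linarith
      · push_neg at hi'
        have h1 : clauseX n m γ (cl γ).1 (cl γ).2.1 (cl γ).2.2 (xIdx n m i') = 0 := by
          simp [clauseX, cIdx, xIdx, bIdx, hi'.1, hi'.2.1, hi'.2.2]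
        rw [h1]
        simp only [one_mul, mul_zero, sub_zero]
        rw [abs_le] at hb ⊢
        constructor <;> linarith
lemma fold_inv (n m : ℕ) (cl : Fin m → Fin n × Fin n × Fin n)
    (hcl : ClauseDistinct n m cl) (l : List (Gadget n m)) :
    ∀ (S : Finset (Gadget n m)) (w : SatIdx n m → ℝ), l.Nodup →
      (∀ g ∈ l, g ∉ S) → SatInv n m S w →
      SatInv n m (S ∪ l.toFinset) (l.foldl (sgdStep n m cl) w) := by
  induction l with
  | nil => intro S w _ _ hI; simpa using hI
  | cons g l ih =>
    intro S w hnd hdis hI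
    have hstep := step_inv n m cl hcl S w g (hdis g (List.mem_cons_self (a := g) (l := l))) hI
    have hrec := ih (insert g S) (sgdStep n m cl w g) (List.nodup_cons.1 hnd).2
      (fun g' hg' => by
        rw [Finset.mem_insert]
        push_neg
        exact ⟨fun h => (List.nodup_cons.1 hnd).1 (h ▸ hg'),
          hdis g' (List.mem_cons_of_mem _ hg')⟩) hstep
    have hset : insert g S ∪ l.toFinset = S ∪ (g :: l).toFinset := by
      ext a; simp [Finset.mem_insert, Finset.mem_union, or_assoc]
    rw [List.foldl_cons]
    rw [← hset]
    exact hrec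

/-- In the SAT construction: for any `T ⊆ T₀` and any order of epoch 1, for all
`1 ≤ i ≤ n`: if `var(i) ∈ T` then `w_{x_i}^{(1)} ∈ U(1, 1/(6000 N))`, otherwise
`w_{x_i}^{(1)} ∈ U(-1, 1/(6000 N))`. -/
theorem stmt12 (n m : ℕ) (cl : Fin m → Fin n × Fin n × Fin n)
    (hcl : ClauseDistinct n m cl)
    (T : Finset (Gadget n m)) (os : ℕ → List (Gadget n m))
    (hos : ∀ e, 1 ≤ e → List.Perm (os e) T.toList)
    (i : Fin n) :
    (Sum.inl i ∈ T →
      |runEpochs n m cl os 1 (xIdx n m i) - 1| < 1 / (6000 * (Nval n m : ℝ))) ∧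
    (Sum.inl i ∉ T →
      |runEpochs n m cl os 1 (xIdx n m i) - (-1)| < 1 / (6000 * (Nval n m : ℝ))) := by
  have hperm := hos 1 le_rfl
  have hnd : (os 1).Nodup := hperm.nodup_iff.2 T.nodup_toList
  have htf : (os 1).toFinset = T := by
    rw [List.toFinset_eq_of_perm _ _ hperm]; exact Finset.toList_toFinset T
  have hI0 : SatInv n m (∅ : Finset (Gadget n m)) (winit n m) := by
    constructor
    · intro γ _; exact ⟨rfl, rfl⟩
    · intro i'
      simp [winit, xIdx]
  have hfold := fold_inv n m cl hcl (os 1) ∅ (winit n m) hnd (by simp) hI0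
  rw [Finset.empty_union, htf] at hfold
  have hrun : runEpochs n m cl os 1 = (os 1).foldl (sgdStep n m cl) (winit n m) := rfl
  have hx := hfold.2 i
  rw [hrun]
  have hlt := keps_lt n m T
  constructor
  · intro hmem
    rw [if_pos hmem] at hx
    exact lt_of_le_of_lt hx hlt
  · intro hmem
    rw [if_neg hmem] at hx
    exact lt_of_le_of_lt hx hlt
end
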